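/- arXiv:1601.03981 — 12 statements merged into one kernel-verified Lean document; each statement's English description precedes it below -/
import Mathlib

section
/- The sum over all lines ℓ in 𝔽_q² of (|ℓ ∩ E| − |E|/q)² is at most q·|E|. -/
open Finset
open scoped Classical

/-- An affine line in `F × F`, given as the finset of solutions of `a*x + b*y = c`
with `(a,b) ≠ (0,0)`. -/
def IsLine {F : Type*} [Field F] [Fintype F] [DecidableEq F] (ℓ : Finset (F × F)) : Prop :=
  ∃ a b c : F, (a, b) ≠ (0, 0) ∧
    ℓ = Finset.univ.filter (fun p : F × F => a * p.1 + b * p.2 = c)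

/-!
Sort the `q² + q` lines into their `q + 1` parallel classes. The `q` lines of one class
partition the plane, so their incidences with `E` add up to `|E|`, and the class contributes
`∑ i(ℓ)² - |E|²/q` to the sum. Summing `i(ℓ)²` over all lines counts pairs `(p, p') ∈ E²`, each
with the number of lines through both points: `q + 1` if `p = p'` and `1` otherwise. This gives
`|E|² + q|E|`, so the whole sum is `q|E| - |E|²/q`.
-/

section Variance

variable {ι K : Type*} [Field K]

theorem Finset.sum_sub_mean_sq (s : Finset ι) (x : ι → K) :
    ∑ i ∈ s, (x i - (∑ j ∈ s, x j) / #s) ^ 2 = ∑ i ∈ s, x i ^ 2 - (∑ i ∈ s, x i) ^ 2 / #s := by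
  set S := ∑ j ∈ s, x j
  have hconst : (#s : K) * (S / #s) ^ 2 = S ^ 2 / #s := by
    rcases eq_or_ne (#s : K) 0 with h | h
    · simp [h]
    · field_simp
  simp only [sub_sq, sum_add_distrib, sum_sub_distrib, ← sum_mul, ← mul_sum, sum_const,
    nsmul_eq_mul]
  rw [hconst]
  ring

end Variance

theorem Finset.sum_card_fiberwise_sq {α β : Type*} [Fintype β] [DecidableEq β]
    (s : Finset α) (f : α → β) :
    ∑ c, #{a ∈ s | f a = c} ^ 2 = ∑ a ∈ s, #{b ∈ s | f b = f a} :=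
  calc ∑ c, #{a ∈ s | f a = c} ^ 2
      = ∑ c, ∑ a ∈ s with f a = c, #{b ∈ s | f b = c} := by simp [sq]
    _ = ∑ c, ∑ a ∈ s with f a = c, #{b ∈ s | f b = f a} :=
        sum_congr rfl fun c _ => sum_congr rfl fun a ha => by rw [(mem_filter.1 ha).2]
    _ = ∑ a ∈ s, #{b ∈ s | f b = f a} := sum_fiberwise s f _

section Lines

variable {F : Type*} [Field F]

/-- Directions are encoded by `Option F`: `some m` is the slope `m` and `none` is vertical.
The lines of direction `d` are exactly the level sets of `intercept d`. -/
def intercept : Option F → F × F → F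
  | none, p => p.1
  | some m, p => p.2 - m * p.1

def pointOnLine : Option F → F → F → F × F
  | none, c, t => (c, t)
  | some m, c, t => (t, m * t + c)

theorem intercept_pointOnLine (d : Option F) (c t : F) : intercept d (pointOnLine d c t) = c := by
  cases d <;> simp [intercept, pointOnLine]

variable [Fintype F] [DecidableEq F]

def affineLine (d : Option F) (c : F) : Finset (F × F) := {p | intercept d p = c}

@[simp]
theorem mem_affineLine {d : Option F} {c : F} {p : F × F} :
    p ∈ affineLine d c ↔ intercept d p = c := by
  simp [affineLine]

theorem isLine_affineLine (d : Option F) (c : F) : IsLine (affineLine d c) := by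
  cases d with
  | none => exact ⟨1, 0, c, by simp, by ext p; simp [intercept]⟩
  | some m =>
    refine ⟨-m, 1, c, by simp, ?_⟩
    ext p
    simp only [mem_affineLine, intercept, mem_filter, mem_univ, true_and]
    ring_nf

theorem IsLine.exists_eq_affineLine {ℓ : Finset (F × F)} (h : IsLine ℓ) :
    ∃ d c, affineLine d c = ℓ := by
  obtain ⟨a, b, c, hab, rfl⟩ := h
  by_cases hb : b = 0
  · have ha : a ≠ 0 := fun ha => hab (by simp [ha, hb])
    refine ⟨none, c / a, ?_⟩
    ext p
    simp only [mem_affineLine, intercept, mem_filter, mem_univ, true_and, hb, eq_div_iff ha]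
    constructor <;> intro h <;> linear_combination h
  · refine ⟨some (-a / b), c / b, ?_⟩
    ext p
    simp only [mem_affineLine, intercept, mem_filter, mem_univ, true_and]
    have hexpand : (p.2 - -a / b * p.1) * b = a * p.1 + b * p.2 := by field_simp; ring
    rw [eq_div_iff hb, hexpand]

theorem affineLine_injective :
    Function.Injective fun dc : Option F × F => affineLine dc.1 dc.2 := by
  rintro ⟨d, c⟩ ⟨d', c'⟩ h
  have hmem : ∀ t, intercept d' (pointOnLine d c t) = c' := fun t => by
    rw [← mem_affineLine, ← show affineLine d c = affineLine d' c' from h, mem_affineLine,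
      intercept_pointOnLine]
  have h0 := hmem 0
  have h1 := hmem 1
  cases d <;> cases d' <;>
    simp only [intercept, pointOnLine, Prod.mk.injEq, Option.some.injEq, reduceCtorEq, true_and,
      false_and] at h0 h1 ⊢
  · exact h0
  · exact zero_ne_one (by linear_combination h0 - h1)
  · exact zero_ne_one (by linear_combination h0 - h1)
  · exact ⟨by linear_combination h1 - h0, by linear_combination h0⟩

theorem sum_isLine_eq_sum_affineLine {M : Type*} [AddCommMonoid M] (g : Finset (F × F) → M) :
    ∑ ℓ ∈ univ.filter IsLine, g ℓ = ∑ d, ∑ c, g (affineLine d c) := by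
  have hlines :
      univ.filter IsLine = univ.image fun dc : Option F × F => affineLine dc.1 dc.2 := by
    ext ℓ
    simp only [mem_filter, mem_univ, true_and, mem_image, Prod.exists]
    exact ⟨IsLine.exists_eq_affineLine, fun ⟨d, c, h⟩ => h ▸ isLine_affineLine d c⟩
  rw [hlines, sum_image affineLine_injective.injOn, Fintype.sum_prod_type]

theorem card_filter_intercept_eq (a b : F × F) :
    #{d : Option F | intercept d b = intercept d a} =
      if b = a then Fintype.card F + 1 else 1 := by
  split_ifs with hba
  · simp [hba, Fintype.card_option]
  rw [card_eq_one]
  by_cases h1 : b.1 = a.1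
  · refine ⟨none, eq_singleton_iff_unique_mem.2 ⟨?_, ?_⟩⟩
    · rw [mem_filter]
      exact ⟨mem_univ _, h1⟩
    rintro (_ | m) hm
    · rfl
    · have hm' : b.2 - m * b.1 = a.2 - m * a.1 := (mem_filter.1 hm).2
      exact absurd (Prod.ext h1 (by linear_combination hm' + m * h1)) hba
  · have hne : b.1 - a.1 ≠ 0 := sub_ne_zero.2 h1
    refine ⟨some ((b.2 - a.2) / (b.1 - a.1)), eq_singleton_iff_unique_mem.2 ⟨?_, ?_⟩⟩
    · rw [mem_filter]
      refine ⟨mem_univ _, ?_⟩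
      simp only [intercept]
      field_simp
      ring
    rintro (_ | m) hm
    · exact absurd (mem_filter.1 hm).2 h1
    · have hm' : b.2 - m * b.1 = a.2 - m * a.1 := (mem_filter.1 hm).2
      rw [Option.some_inj, eq_div_iff hne]
      linear_combination -hm'

theorem card_inter_affineLine (d : Option F) (c : F) (E : Finset (F × F)) :
    #(affineLine d c ∩ E) = #{p ∈ E | intercept d p = c} := by
  rw [affineLine, filter_inter, univ_inter]

theorem sum_card_inter_affineLine (d : Option F) (E : Finset (F × F)) :
    ∑ c, #(affineLine d c ∩ E) = #E := by
  simp only [card_inter_affineLine]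
  exact (card_eq_sum_card_fiberwise fun p _ => mem_univ (intercept d p)).symm

theorem sum_sum_card_inter_affineLine_sq (E : Finset (F × F)) :
    ∑ d, ∑ c, #(affineLine d c ∩ E) ^ 2 = #E ^ 2 + Fintype.card F * #E := by
  simp only [card_inter_affineLine, sum_card_fiberwise_sq]
  calc ∑ d, ∑ a ∈ E, #{b ∈ E | intercept d b = intercept d a}
      = ∑ a ∈ E, ∑ b ∈ E, #{d : Option F | intercept d b = intercept d a} := by
        rw [sum_comm]
        exact sum_congr rfl fun a _ => sum_card_bipartiteAbove_eq_sum_card_bipartiteBelow _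
    _ = ∑ a ∈ E, ∑ b ∈ E, (1 + if b = a then Fintype.card F else 0) := by
        refine sum_congr rfl fun a _ => sum_congr rfl fun b _ => ?_
        rw [card_filter_intercept_eq]
        split_ifs <;> omega
    _ = #E ^ 2 + Fintype.card F * #E := by
        simp only [sum_add_distrib, sum_ite_eq', sum_ite_mem, inter_self, sum_const, smul_eq_mul]
        ring

end Lines

theorem variance_of_incidence_function
    {F : Type*} [Field F] [Fintype F] [DecidableEq F] (q : ℕ) (hq : Fintype.card F = q)
    (E : Finset (F × F)) :
    ∑ ℓ ∈ Finset.univ.filter (fun ℓ : Finset (F × F) => IsLine ℓ),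
        (((ℓ ∩ E).card : ℝ) - (E.card : ℝ) / (q : ℝ)) ^ 2
      ≤ (q : ℝ) * (E.card : ℝ) := by
  subst hq
  have hq0 : (Fintype.card F : ℝ) ≠ 0 := Nat.cast_ne_zero.2 Fintype.card_ne_zero
  have hfirst (d : Option F) : ∑ c, (#(affineLine d c ∩ E) : ℝ) = #E := by
    exact_mod_cast sum_card_inter_affineLine d E
  have hsecond : ∑ d : Option F, ∑ c, (#(affineLine d c ∩ E) : ℝ) ^ 2
      = #E ^ 2 + Fintype.card F * #E := by
    exact_mod_cast sum_sum_card_inter_affineLine_sq E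
  calc ∑ ℓ ∈ univ.filter IsLine, ((#(ℓ ∩ E) : ℝ) - #E / Fintype.card F) ^ 2
      = ∑ d : Option F, (∑ c, (#(affineLine d c ∩ E) : ℝ) ^ 2 - #E ^ 2 / Fintype.card F) := by
        rw [sum_isLine_eq_sum_affineLine]
        refine sum_congr rfl fun d _ => ?_
        rw [← hfirst d, ← card_univ, sum_sub_mean_sq]
    _ = Fintype.card F * #E - #E ^ 2 / Fintype.card F := by
        rw [sum_sub_distrib, hsecond, sum_const, card_univ, Fintype.card_option, nsmul_eq_mul]
        field_simp
        push_cast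
        ring
    _ ≤ Fintype.card F * #E := sub_le_self _ (by positivity)
end

section
/- For any E ⊆ 𝔽_q² and any nonempty Θ ⊆ 𝔽_q, there exists θ ∈ Θ such that the projection set E·(1,θ) = {v₁ + θ·v₂ : (v₁,v₂) ∈ E} has cardinality at least q·|E|·|Θ| / (q² + |E|·|Θ|). -/
/-!
For a direction θ let `C θ` count the pairs of `E × E` with equal projection `v.1 + θ * v.2`.
Cauchy–Schwarz over the fibres of the projection gives `|E|² ≤ |E·(1,θ)| · C θ`, and in particular
`|E|² ≤ q · C θ`. Two distinct points have equal projection in at most one direction, so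
`∑_θ C θ ≤ q|E| + |E|²`. The directions outside `Θ` each carry at least `|E|²/q` of this sum, so
some `θ ∈ Θ` has `|Θ| · C θ ≤ q|E| + |Θ||E|²/q`, and Cauchy–Schwarz turns this into the bound.
-/

open Finset

section Collisions

variable {α β : Type*} [DecidableEq β]

def collisions (E : Finset α) (f : α → β) : ℕ := #{p ∈ E ×ˢ E | f p.1 = f p.2}

lemma sum_sq_card_fiber_eq_collisions (E : Finset α) (f : α → β) :
    ∑ t ∈ E.image f, #{v ∈ E | f v = t} ^ 2 = collisions E f := by
  rw [collisions, card_eq_sum_card_fiberwise (f := fun p => f p.1) (t := E.image f)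
    fun p hp => mem_image_of_mem f (mem_product.1 (mem_filter.1 hp).1).1]
  refine sum_congr rfl fun t _ => ?_
  rw [sq, ← card_product]
  congr 1
  ext ⟨u, v⟩
  simp only [mem_filter, mem_product]
  constructor
  · rintro ⟨⟨hu, hfu⟩, hv, hfv⟩
    exact ⟨⟨⟨hu, hv⟩, hfu.trans hfv.symm⟩, hfu⟩
  · rintro ⟨⟨⟨hu, hv⟩, huv⟩, hfu⟩
    exact ⟨⟨hu, hfu⟩, hv, huv ▸ hfu⟩

lemma sq_card_le_card_image_mul_collisions (E : Finset α) (f : α → β) :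
    #E ^ 2 ≤ #(E.image f) * collisions E f := by
  rw [← sum_sq_card_fiber_eq_collisions, card_eq_sum_card_image f E]
  exact sq_sum_le_card_mul_sum_sq

lemma sq_card_le_card_mul_collisions [Fintype β] (E : Finset α) (f : α → β) :
    #E ^ 2 ≤ Fintype.card β * collisions E f :=
  (sq_card_le_card_image_mul_collisions E f).trans
    (Nat.mul_le_mul_right _ (card_le_univ _))

end Collisions

section Directions

variable {F : Type*} [Field F] [Fintype F] [DecidableEq F]

lemma card_filter_dot_eq_le_one {u v : F × F} (huv : u ≠ v) :
    #{θ : F | u.1 + θ * u.2 = v.1 + θ * v.2} ≤ 1 := by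
  refine card_le_one.2 fun θ hθ θ' hθ' => ?_
  simp only [mem_filter, mem_univ, true_and] at hθ hθ'
  by_contra hne
  have h2 : u.2 = v.2 := by
    have : (θ - θ') * (u.2 - v.2) = 0 := by linear_combination hθ - hθ'
    simpa [sub_eq_zero, hne] using this
  have h1 : u.1 = v.1 := by rw [h2] at hθ; exact add_right_cancel hθ
  exact huv (Prod.ext h1 h2)

lemma sum_collisions_dot_le (E : Finset (F × F)) :
    ∑ θ : F, collisions E (fun v : F × F => v.1 + θ * v.2)
      ≤ Fintype.card F * #E + #E ^ 2 := by
  have hpair : ∀ p : (F × F) × (F × F),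
      #{θ : F | p.1.1 + θ * p.1.2 = p.2.1 + θ * p.2.2}
        ≤ (if p.1 = p.2 then Fintype.card F else 0) + 1 := by
    intro p
    by_cases h : p.1 = p.2
    · rw [if_pos h]
      exact (card_le_univ _).trans (Nat.le_succ _)
    · simpa [h] using card_filter_dot_eq_le_one h
  calc ∑ θ : F, collisions E (fun v : F × F => v.1 + θ * v.2)
      = ∑ p ∈ E ×ˢ E, #{θ : F | p.1.1 + θ * p.1.2 = p.2.1 + θ * p.2.2} := by
        simp only [collisions, card_filter]
        exact sum_comm
    _ ≤ ∑ p ∈ E ×ˢ E, ((if p.1 = p.2 then Fintype.card F else 0) + 1) :=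
        sum_le_sum fun p _ => hpair p
    _ = Fintype.card F * #E + #E ^ 2 := by
        rw [sum_add_distrib, sum_product]
        simp [sum_ite_eq, mul_comm, sq]

end Directions

lemma exists_mem_card_mul_le {ι R : Type*} [Fintype ι] [DecidableEq ι] [CommRing R] [LinearOrder R]
    [IsStrictOrderedRing R] {g : ι → R} {S L : R} (hsum : ∑ i, g i ≤ S) (hlow : ∀ i, L ≤ g i)
    {s : Finset ι} (hs : s.Nonempty) :
    ∃ i ∈ s, #s * g i ≤ S - (Fintype.card ι - #s) * L := by
  have hcompl : (Fintype.card ι - #s : R) * L ≤ ∑ i ∈ sᶜ, g i := by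
    rw [← Nat.cast_sub (card_le_univ s), ← card_compl, ← nsmul_eq_mul]
    exact card_nsmul_le_sum _ _ _ fun i _ => hlow i
  refine exists_le_of_sum_le hs ?_
  rw [sum_const, nsmul_eq_mul, ← mul_sum]
  gcongr
  linarith [sum_add_sum_compl s g]

theorem good_direction
    {F : Type*} [Field F] [Fintype F] [DecidableEq F] (q : ℕ) (hq : Fintype.card F = q)
    (E : Finset (F × F)) (Θ : Finset F) (hΘ : Θ.Nonempty) :
    ∃ θ ∈ Θ, ((E.image (fun v : F × F => v.1 + θ * v.2)).card : ℝ)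
      ≥ (q : ℝ) * E.card * Θ.card / ((q : ℝ) ^ 2 + E.card * Θ.card) := by
  obtain rfl | hE := E.eq_empty_or_nonempty
  · obtain ⟨θ, hθ⟩ := hΘ
    exact ⟨θ, hθ, by simp⟩
  set C : F → ℕ := fun θ => collisions E (fun v : F × F => v.1 + θ * v.2)
  have hsum : ∑ θ, (q * C θ : ℝ) ≤ q * (q * #E + #E ^ 2) := by
    rw [← mul_sum]
    gcongr
    exact_mod_cast hq ▸ sum_collisions_dot_le E
  have hlow : ∀ θ, (#E ^ 2 : ℝ) ≤ q * C θ := fun θ => by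
    exact_mod_cast hq ▸ sq_card_le_card_mul_collisions E _
  obtain ⟨θ, hθΘ, hθ⟩ := exists_mem_card_mul_le hsum hlow hΘ
  rw [hq] at hθ
  refine ⟨θ, hθΘ, ?_⟩
  set P := #(E.image fun v : F × F => v.1 + θ * v.2)
  have hCS : (#E ^ 2 : ℝ) ≤ P * C θ := by
    exact_mod_cast sq_card_le_card_image_mul_collisions E _
  have hn : (0 : ℝ) < #E := by exact_mod_cast hE.card_pos
  rw [ge_iff_le, div_le_iff₀ (by positivity)]
  refine le_of_mul_le_mul_left ?_ hn
  calc (#E : ℝ) * (q * #E * #Θ) = q * #Θ * #E ^ 2 := by ring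
    _ ≤ q * #Θ * (P * C θ) := by gcongr
    _ = P * (#Θ * (q * C θ)) := by ring
    _ ≤ P * (q * (q * #E + #E ^ 2) - (q - #Θ) * #E ^ 2) := by gcongr
    _ = #E * (P * (q ^ 2 + #E * #Θ)) := by ring
end

section
/- For every E ⊆ 𝔽_q² there exists ξ ∈ 𝔽_q such that |E·(1,ξ)| ≥ (1/2)·min{|E|, q}. -/
open Finset

theorem discrete_marstrand
    {F : Type*} [Field F] [Fintype F] [DecidableEq F] (q : ℕ) (hq : Fintype.card F = q)
    (E : Finset (F × F)) :
    ∃ ξ : F, ((E.image (fun v : F × F => v.1 + ξ * v.2)).card : ℝ)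
      ≥ (1 / 2) * min (E.card : ℝ) (q : ℝ) := by
  classical
  have hq1 : 1 ≤ q := hq ▸ Fintype.card_pos
  have hqR : (1 : ℝ) ≤ (q : ℝ) := by exact_mod_cast hq1
  obtain hE | hE := E.eq_empty_or_nonempty
  · refine ⟨0, ?_⟩
    rw [hE]
    simp only [image_empty, card_empty, Nat.cast_zero, ge_iff_le]
    rw [min_eq_left (by positivity)]
    norm_num
  set π : F → F × F → F := fun ξ v => v.1 + ξ * v.2 with hπ
  set C : F → ℕ := fun ξ => ((E ×ˢ E).filter fun p => π ξ p.1 = π ξ p.2).card with hCdef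
  -- Cauchy–Schwarz step
  have hA : ∀ ξ : F, (E.card : ℝ) ^ 2 ≤ ((E.image (π ξ)).card : ℝ) * (C ξ : ℝ) := by
    intro ξ
    set I := E.image (π ξ) with hI
    set f : F → ℕ := fun y => (E.filter fun v => π ξ v = y).card with hf
    have hmaps : ∀ v ∈ E, π ξ v ∈ I := fun v hv => mem_image_of_mem _ hv
    have h1 : E.card = ∑ y ∈ I, f y := card_eq_sum_card_fiberwise hmaps
    have h2 : (C ξ : ℕ) = ∑ y ∈ I, f y * f y := by
      have hc : C ξ = ∑ v ∈ E, f (π ξ v) := by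
        rw [hCdef]
        simp only [card_filter, Finset.sum_product]
        refine Finset.sum_congr rfl fun v hv => ?_
        rw [hf]
        simp only [card_filter]
        refine Finset.sum_congr rfl fun w hw => ?_
        simp [eq_comm]
      rw [hc, ← Finset.sum_fiberwise_of_maps_to hmaps (fun v => f (π ξ v))]
      refine Finset.sum_congr rfl fun y hy => ?_
      have hcg : ∀ v ∈ E.filter (fun v => π ξ v = y), f (π ξ v) = f y := by
        intro v hv
        rw [(Finset.mem_filter.mp hv).2]
      rw [Finset.sum_congr rfl hcg, Finset.sum_const, smul_eq_mul]
    have hCS := Finset.sum_mul_sq_le_sq_mul_sq I (fun _ => (1 : ℝ)) (fun y => (f y : ℝ))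
    have hcard : (E.card : ℝ) = ∑ y ∈ I, (f y : ℝ) := by exact_mod_cast h1
    have hCr : (C ξ : ℝ) = ∑ y ∈ I, (f y : ℝ) ^ 2 := by
      rw [h2]
      push_cast
      exact Finset.sum_congr rfl fun y _ => (sq (f y : ℝ)).symm
    rw [hcard, hCr]
    simpa using hCS
  -- counting step
  have hB : ∑ ξ : F, C ξ ≤ q * E.card + E.card ^ 2 := by
    have hswap : ∑ ξ : F, C ξ
        = ∑ p ∈ E ×ˢ E, (univ.filter fun ξ : F => π ξ p.1 = π ξ p.2).card := by
      simp only [hCdef, card_filter]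
      rw [Finset.sum_comm]
    rw [hswap]
    have hbound : ∀ p ∈ E ×ˢ E,
        (univ.filter fun ξ : F => π ξ p.1 = π ξ p.2).card ≤ if p.1 = p.2 then q else 1 := by
      intro p hp
      split_ifs with h
      · calc (univ.filter fun ξ : F => π ξ p.1 = π ξ p.2).card ≤ (univ : Finset F).card :=
              card_filter_le _ _
          _ = q := by rw [Finset.card_univ, hq]
      · apply Finset.card_le_one.mpr
        intro ξ hξ ξ' hξ'
        have e1 : p.1.1 + ξ * p.1.2 = p.2.1 + ξ * p.2.2 := (Finset.mem_filter.mp hξ).2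
        have e2 : p.1.1 + ξ' * p.1.2 = p.2.1 + ξ' * p.2.2 := (Finset.mem_filter.mp hξ').2
        by_cases hbd : p.1.2 = p.2.2
        · exfalso
          apply h
          have : p.1.1 = p.2.1 := by
            have h' := e1
            rw [hbd] at h'
            exact add_right_cancel h'
          exact Prod.ext this hbd
        · have hmul : ξ * (p.1.2 - p.2.2) = ξ' * (p.1.2 - p.2.2) := by ring_nf; linear_combination e1 - e2
          exact mul_right_cancel₀ (sub_ne_zero.mpr hbd) hmul
    calc ∑ p ∈ E ×ˢ E, (univ.filter fun ξ : F => π ξ p.1 = π ξ p.2).card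
        ≤ ∑ p ∈ E ×ˢ E, (if p.1 = p.2 then q else 1) := Finset.sum_le_sum hbound
      _ = q * ((E ×ˢ E).filter fun p => p.1 = p.2).card
          + ((E ×ˢ E).filter fun p => ¬ p.1 = p.2).card := by
          rw [Finset.sum_ite, Finset.sum_const, Finset.sum_const, smul_eq_mul, smul_eq_mul,
            mul_comm, mul_one]
      _ ≤ q * E.card + E.card ^ 2 := by
          gcongr
          · calc ((E ×ˢ E).filter fun p => p.1 = p.2).card
                ≤ (E.image fun a => (a, a)).card := by
                  apply Finset.card_le_card
                  intro p hp
                  obtain ⟨hpm, hpe⟩ := Finset.mem_filter.mp hp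
                  refine Finset.mem_image.mpr ⟨p.1, (Finset.mem_product.mp hpm).1, ?_⟩
                  exact Prod.ext rfl hpe
              _ ≤ E.card := Finset.card_image_le
          · calc ((E ×ˢ E).filter fun p => ¬ p.1 = p.2).card ≤ (E ×ˢ E).card :=
                card_filter_le _ _
              _ = E.card ^ 2 := by rw [Finset.card_product, sq]
  -- pigeonhole: pick ξ minimizing C
  obtain ⟨ξ, -, hmin⟩ := Finset.exists_min_image (univ : Finset F) C ⟨hE.choose.1 + hE.choose.2,
    Finset.mem_univ _⟩
  have hqC : q * C ξ ≤ q * E.card + E.card ^ 2 := by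
    calc q * C ξ = (univ : Finset F).card • C ξ := by rw [Finset.card_univ, hq, smul_eq_mul]
      _ ≤ ∑ ξ' : F, C ξ' := Finset.card_nsmul_le_sum _ _ _ fun ξ' _ => hmin ξ' (Finset.mem_univ _)
      _ ≤ q * E.card + E.card ^ 2 := hB
  refine ⟨ξ, ?_⟩
  set n : ℝ := (E.card : ℝ) with hn
  set N : ℝ := ((E.image (π ξ)).card : ℝ) with hN
  have hn0 : 0 < n := by
    rw [hn]
    exact_mod_cast Finset.card_pos.mpr hE
  have hN0 : 0 ≤ N := by positivity
  have hCre : (q : ℝ) * (C ξ : ℝ) ≤ (q : ℝ) * n + n ^ 2 := by rw [hn]; exact_mod_cast hqC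
  have key : (q : ℝ) * n ≤ N * ((q : ℝ) + n) := by
    have h1 : (q : ℝ) * n ^ 2 ≤ N * ((q : ℝ) * n + n ^ 2) := by
      calc (q : ℝ) * n ^ 2 ≤ (q : ℝ) * (N * (C ξ : ℝ)) := by
            have := hA ξ
            nlinarith [this]
        _ = N * ((q : ℝ) * (C ξ : ℝ)) := by ring
        _ ≤ N * ((q : ℝ) * n + n ^ 2) := by
            apply mul_le_mul_of_nonneg_left hCre hN0
    nlinarith [h1, hn0]
  -- conclude
  set m : ℝ := min n (q : ℝ) with hm
  set M : ℝ := max n (q : ℝ) with hM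
  have hmM : m * M = (q : ℝ) * n := by
    rw [hm, hM, min_mul_max]; ring
  have hsum : (q : ℝ) + n ≤ 2 * M := by
    have h1 : n ≤ M := le_max_left _ _
    have h2 : (q : ℝ) ≤ M := le_max_right _ _
    linarith
  have hM0 : 0 < M := lt_of_lt_of_le (by linarith) (le_max_right _ _)
  have : m * M ≤ 2 * N * M := by
    calc m * M = (q : ℝ) * n := hmM
      _ ≤ N * ((q : ℝ) + n) := key
      _ ≤ N * (2 * M) := by apply mul_le_mul_of_nonneg_left hsum hN0
      _ = 2 * N * M := by ring
  have hfin : m ≤ 2 * N := le_of_mul_le_mul_right this hM0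
  show N ≥ (1 / 2) * m
  linarith
end

section
/- For any point set E ⊆ 𝔽_q² and any collection 𝓛 of lines in 𝔽_q², the number of incidences I(E,𝓛) = Σ_{ℓ∈𝓛} |ℓ ∩ E| satisfies |I(E,𝓛) − |E||𝓛|/q| ≤ √(q·|E|·|𝓛|). -/
/-!
Among all `q² + q` lines of `F²`, every point lies on `q + 1` lines and any two distinct points on
exactly one. Hence the counts `X ℓ = |ℓ ∩ E|` satisfy `∑ X ℓ = (q + 1)|E|` and
`∑ X ℓ ² = |E|(|E| + q)`, so that over all lines `∑ (X ℓ - |E|/q)² = q|E| - |E|²/q ≤ q|E|`.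
Cauchy–Schwarz over `𝓛` then bounds `|∑_{ℓ ∈ 𝓛} (X ℓ - |E|/q)|` by `√(|𝓛| q |E|)`.
-/

open Finset
open scoped Classical

theorem AddMonoidHom.card_fiber_mul_card_of_surjective {G M : Type*} [AddGroup G] [Fintype G]
    [AddMonoid M] [Fintype M] [DecidableEq M] (f : G →+ M) (hf : Function.Surjective f) (x : M) :
    #{g | f g = x} * Fintype.card M = Fintype.card G := by
  calc #{g | f g = x} * Fintype.card M = ∑ y, #{g | f g = y} := by
        rw [sum_congr rfl fun y _ ↦ card_fiber_eq_of_mem_range f (hf y) (hf x), sum_const,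
          card_univ, smul_eq_mul, mul_comm]
    _ = Fintype.card G := (card_eq_sum_card_fiberwise fun _ _ ↦ mem_univ _).symm

theorem abs_sum_le_sqrt_card_mul_sum_sq {ι : Type*} {s t : Finset ι} (hst : s ⊆ t) (f : ι → ℝ) :
    |∑ i ∈ s, f i| ≤ √(#s * ∑ i ∈ t, f i ^ 2) := by
  rw [← Real.sqrt_sq_eq_abs]
  gcongr
  calc (∑ i ∈ s, f i) ^ 2 ≤ #s * ∑ i ∈ s, f i ^ 2 := sq_sum_le_card_mul_sum_sq
    _ ≤ #s * ∑ i ∈ t, f i ^ 2 := by gcongr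

section Incidence

variable {P : Type*} [DecidableEq P] {A : Finset (Finset P)} {r : ℕ}

theorem sum_card_inter_filter_mem
    (hpair : ∀ p p', p ≠ p' → #{ℓ ∈ A | p ∈ ℓ ∧ p' ∈ ℓ} = 1) {E : Finset P} {p : P} (hp : p ∈ E) :
    ∑ ℓ ∈ A with p ∈ ℓ, #(ℓ ∩ E) = #(E.erase p) + #{ℓ ∈ A | p ∈ ℓ} := by
  have hcard : ∀ ℓ ∈ A.filter (p ∈ ·), #(ℓ ∩ E) = #(E.erase p ∩ ℓ) + 1 := fun ℓ hℓ ↦ by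
    rw [erase_inter, card_erase_add_one (mem_inter.2 ⟨hp, (mem_filter.1 hℓ).2⟩), inter_comm]
  have hother : ∀ p' ∈ E.erase p, #{ℓ ∈ A.filter (p ∈ ·) | p' ∈ ℓ} = 1 := fun p' hp' ↦ by
    rw [filter_filter]
    exact hpair p p' (ne_of_mem_erase hp').symm
  rw [sum_congr rfl hcard, sum_add_distrib, sum_card_inter hother, mul_one, ← card_eq_sum_ones]

theorem sum_card_inter_sq (hr : ∀ p, #{ℓ ∈ A | p ∈ ℓ} = r)
    (hpair : ∀ p p', p ≠ p' → #{ℓ ∈ A | p ∈ ℓ ∧ p' ∈ ℓ} = 1) (E : Finset P) :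
    ∑ ℓ ∈ A, (#(ℓ ∩ E) : ℝ) ^ 2 = #E * (#E - 1 + r) := by
  have hsq : ∑ ℓ ∈ A, #(ℓ ∩ E) ^ 2 = ∑ p ∈ E, ∑ ℓ ∈ A with p ∈ ℓ, #(ℓ ∩ E) := by
    simp_rw [sq, ← smul_eq_mul, ← sum_const]
    exact sum_comm' fun ℓ p ↦ by simp only [mem_inter, mem_filter]; tauto
  have hterm : ∀ p ∈ E, ((∑ ℓ ∈ A with p ∈ ℓ, #(ℓ ∩ E) : ℕ) : ℝ) = #E - 1 + r := fun p hp ↦ by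
    rw [sum_card_inter_filter_mem hpair hp, hr, Nat.cast_add, cast_card_erase_of_mem hp]
  calc ∑ ℓ ∈ A, (#(ℓ ∩ E) : ℝ) ^ 2
      = ∑ p ∈ E, ((∑ ℓ ∈ A with p ∈ ℓ, #(ℓ ∩ E) : ℕ) : ℝ) := by exact_mod_cast hsq
    _ = #E * (#E - 1 + r) := by rw [sum_congr rfl hterm, sum_const, nsmul_eq_mul]

theorem sum_sq_card_inter_sub (hr : ∀ p, #{ℓ ∈ A | p ∈ ℓ} = r)
    (hpair : ∀ p p', p ≠ p' → #{ℓ ∈ A | p ∈ ℓ ∧ p' ∈ ℓ} = 1) (E : Finset P) (m : ℝ) :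
    ∑ ℓ ∈ A, ((#(ℓ ∩ E) : ℝ) - m) ^ 2 = #E * (#E - 1 + r) - 2 * m * (#E * r) + #A * m ^ 2 := by
  have hmean : ∑ ℓ ∈ A, (#(ℓ ∩ E) : ℝ) = #E * r := by
    simp_rw [inter_comm _ E]
    exact_mod_cast sum_card_inter fun p _ ↦ hr p
  simp only [sub_sq, sum_add_distrib, sum_sub_distrib, ← sum_mul, ← mul_sum, sum_const,
    nsmul_eq_mul, sum_card_inter_sq hr hpair, hmean]
  ring

theorem card_filter_mem_mul_sub_one [Fintype P] {k : ℕ} (hk : ∀ ℓ ∈ A, #ℓ = k)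
    (hpair : ∀ p p', p ≠ p' → #{ℓ ∈ A | p ∈ ℓ ∧ p' ∈ ℓ} = 1) (p : P) :
    #{ℓ ∈ A | p ∈ ℓ} * (k - 1) = Fintype.card P - 1 := by
  have h := sum_card_inter_filter_mem hpair (mem_univ p)
  rw [sum_congr rfl fun ℓ hℓ ↦ by rw [inter_univ, hk ℓ (mem_filter.1 hℓ).1], sum_const, smul_eq_mul,
    card_erase_of_mem (mem_univ p), card_univ] at h
  rw [Nat.mul_sub_one, h, Nat.add_sub_cancel]

end Incidence

section AffinePlane

variable {F : Type*} [Field F] [Fintype F] [DecidableEq F]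

theorem card_filter_mul_add_mul_eq {a b : F} (hab : (a, b) ≠ (0, 0)) (c : F) :
    #{p : F × F | a * p.1 + b * p.2 = c} = Fintype.card F := by
  let φ : F × F →ₗ[F] F := a • LinearMap.fst F F F + b • LinearMap.snd F F F
  have hφ : φ ≠ 0 := fun h ↦ hab <| by
    simpa [φ] using And.intro (LinearMap.congr_fun h (1, 0)) (LinearMap.congr_fun h (0, 1))
  have h := φ.toAddMonoidHom.card_fiber_mul_card_of_surjective (LinearMap.surjective hφ) c
  rw [Fintype.card_prod] at h
  convert Nat.eq_of_mul_eq_mul_right Fintype.card_pos h using 3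
  simp [φ]

theorem IsLine.card_eq {ℓ : Finset (F × F)} (hℓ : IsLine ℓ) : #ℓ = Fintype.card F := by
  obtain ⟨a, b, c, hab, rfl⟩ := hℓ
  exact card_filter_mul_add_mul_eq hab c

def lineThrough (p p' : F × F) : Finset (F × F) :=
  univ.image fun t : F ↦ p + t • (p' - p)

theorem card_lineThrough {p p' : F × F} (hne : p ≠ p') :
    #(lineThrough p p') = Fintype.card F :=
  card_image_of_injective _ <|
    (add_right_injective p).comp (smul_left_injective F (sub_ne_zero.2 hne.symm))

theorem IsLine.eq_lineThrough {ℓ : Finset (F × F)} (hℓ : IsLine ℓ) {p p' : F × F} (hne : p ≠ p')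
    (hp : p ∈ ℓ) (hp' : p' ∈ ℓ) : ℓ = lineThrough p p' := by
  refine (eq_of_subset_of_card_le ?_ (by rw [hℓ.card_eq, card_lineThrough hne])).symm
  obtain ⟨a, b, c, -, rfl⟩ := hℓ
  simp only [lineThrough, mem_filter, mem_univ, true_and, subset_iff, mem_image] at hp hp' ⊢
  rintro _ ⟨t, -, rfl⟩
  simp only [Prod.fst_add, Prod.snd_add, Prod.smul_fst, Prod.smul_snd, Prod.fst_sub, Prod.snd_sub,
    smul_eq_mul]
  linear_combination (1 - t) * hp + t * hp'

theorem exists_isLine_mem_mem {p p' : F × F} (hne : p ≠ p') :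
    ∃ ℓ, IsLine ℓ ∧ p ∈ ℓ ∧ p' ∈ ℓ := by
  refine ⟨_, ⟨p.2 - p'.2, p'.1 - p.1, (p.2 - p'.2) * p.1 + (p'.1 - p.1) * p.2, ?_, rfl⟩, ?_, ?_⟩
  · intro h
    simp only [Prod.mk.injEq, sub_eq_zero] at h
    exact hne (Prod.ext h.2.symm h.1)
  · simp
  · simp only [mem_filter, mem_univ, true_and]
    ring

variable (F) in
noncomputable def affineLines : Finset (Finset (F × F)) := {ℓ | IsLine ℓ}

theorem card_filter_affineLines_mem_mem {p p' : F × F} (hne : p ≠ p') :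
    #{ℓ ∈ affineLines F | p ∈ ℓ ∧ p' ∈ ℓ} = 1 := by
  obtain ⟨ℓ₀, hℓ₀, hp₀, hp₀'⟩ := exists_isLine_mem_mem hne
  rw [card_eq_one]
  refine ⟨ℓ₀, eq_singleton_iff_unique_mem.2 ⟨by simp [affineLines, hℓ₀, hp₀, hp₀'], ?_⟩⟩
  simp only [affineLines, mem_filter, mem_univ, true_and]
  rintro ℓ ⟨hℓ, hp, hp'⟩
  rw [hℓ.eq_lineThrough hne hp hp', hℓ₀.eq_lineThrough hne hp₀ hp₀']

theorem card_filter_affineLines_mem (p : F × F) :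
    #{ℓ ∈ affineLines F | p ∈ ℓ} = Fintype.card F + 1 := by
  have h := card_filter_mem_mul_sub_one (fun ℓ hℓ ↦ (mem_filter.1 hℓ).2.card_eq)
    (fun _ _ ↦ card_filter_affineLines_mem_mem) p
  have hq : 1 < Fintype.card F := Fintype.one_lt_card
  rw [Fintype.card_prod, ← sq, ← one_pow 2, Nat.sq_sub_sq] at h
  exact Nat.eq_of_mul_eq_mul_right (by omega) h

theorem card_affineLines : #(affineLines F) = Fintype.card F ^ 2 + Fintype.card F := by
  have h := sum_card (B := affineLines F) card_filter_affineLines_mem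
  rw [sum_congr rfl fun ℓ hℓ ↦ (mem_filter.1 hℓ).2.card_eq, sum_const, smul_eq_mul,
    Fintype.card_prod] at h
  exact Nat.eq_of_mul_eq_mul_right Fintype.card_pos (h.trans (by ring))

theorem sum_sq_card_inter_sub_le (E : Finset (F × F)) :
    ∑ ℓ ∈ affineLines F, ((#(ℓ ∩ E) : ℝ) - #E / Fintype.card F) ^ 2 ≤ Fintype.card F * #E := by
  rw [sum_sq_card_inter_sub card_filter_affineLines_mem (fun _ _ ↦ card_filter_affineLines_mem_mem),
    card_affineLines]
  have hq : (0 : ℝ) < Fintype.card F := by exact_mod_cast Fintype.card_pos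
  set q : ℝ := (Fintype.card F : ℝ)
  set n : ℝ := (#E : ℝ)
  push_cast
  calc n * (n - 1 + (q + 1)) - 2 * (n / q) * (n * (q + 1)) + (q ^ 2 + q) * (n / q) ^ 2
      = q * n - n ^ 2 / q := by field_simp; ring
    _ ≤ q * n := sub_le_self _ (by positivity)

end AffinePlane

theorem vinh_point_line_incidence
    {F : Type*} [Field F] [Fintype F] [DecidableEq F] (q : ℕ) (hq : Fintype.card F = q)
    (E : Finset (F × F)) (𝓛 : Finset (Finset (F × F))) (h𝓛 : ∀ ℓ ∈ 𝓛, IsLine ℓ) :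
    |(∑ ℓ ∈ 𝓛, ((ℓ ∩ E).card : ℝ)) - (E.card : ℝ) * 𝓛.card / q|
      ≤ Real.sqrt ((q : ℝ) * E.card * 𝓛.card) := by
  subst hq
  have h𝓛A : 𝓛 ⊆ affineLines F := fun ℓ hℓ ↦ by simp [affineLines, h𝓛 ℓ hℓ]
  have hcenter : ∑ ℓ ∈ 𝓛, (#(ℓ ∩ E) : ℝ) - #E * #𝓛 / Fintype.card F
      = ∑ ℓ ∈ 𝓛, ((#(ℓ ∩ E) : ℝ) - #E / Fintype.card F) := by
    rw [sum_sub_distrib, sum_const, nsmul_eq_mul]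
    ring
  rw [hcenter]
  calc _ ≤ √(#𝓛 * ∑ ℓ ∈ affineLines F, ((#(ℓ ∩ E) : ℝ) - #E / Fintype.card F) ^ 2) :=
        abs_sum_le_sqrt_card_mul_sum_sq h𝓛A _
    _ ≤ √(#𝓛 * (Fintype.card F * #E)) := by gcongr; exact sum_sq_card_inter_sub_le E
    _ = _ := by ring_nf
end

section
/- For d ≥ 2 and E ⊆ 𝔽_q^d, the sum over all affine hyperplanes h of (|h ∩ E| − |E|/q)² is at most q^{d−1}·|E|. -/
open Finset
open scoped Classical

/-- An affine hyperplane in `𝔽_q^d`: the solution set of `x ⬝ e = t` for some `e ≠ 0`. -/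
def IsHyperplane {F : Type*} [Field F] [Fintype F] [DecidableEq F] {d : ℕ}
    (h : Finset (Fin d → F)) : Prop :=
  ∃ e : Fin d → F, e ≠ 0 ∧ ∃ t : F,
    h = Finset.univ.filter (fun x : Fin d → F => ∑ i, x i * e i = t)

/-!
Parametrise hyperplanes by pairs `(e, t)` with `e ≠ 0`: each hyperplane arises from at least
`q - 1` pairs `(c • e, c * t)`, and adding the pairs with `e = 0` only adds nonnegative terms.
For fixed `e`, the sum over `t` of `(#{x ∈ E | x ⬝ᵥ e = t} - #E / q) ^ 2` is the number of
pairs `(x, y) ∈ E × E` with `x ⬝ᵥ e = y ⬝ᵥ e`, minus `#E ^ 2 / q`. Summed over all `e`, a pair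
with `x ≠ y` is counted `q ^ (d - 1)` times and a diagonal pair `q ^ d` times, so the total is
exactly `(q - 1) * q ^ (d - 1) * #E`.
-/
section Fibers

variable {α β : Type*} [DecidableEq β] [Fintype β]

lemma sum_card_filter_sq (s : Finset α) (φ : α → β) :
    ∑ b, #{a ∈ s | φ a = b} ^ 2 = #{p ∈ s ×ˢ s | φ p.1 = φ p.2} := by
  calc ∑ b, #{a ∈ s | φ a = b} ^ 2
      = ∑ b, ∑ a ∈ s with φ a = b, #{a' ∈ s | φ a' = b} := by simp [sq]
    _ = ∑ a ∈ s, #{a' ∈ s | φ a' = φ a} := sum_fiberwise' s φ _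
    _ = #{p ∈ s ×ˢ s | φ p.1 = φ p.2} := by
      simp only [card_filter, sum_product, eq_comm]

lemma sum_sq_card_filter_sub_mean [Nonempty β] (s : Finset α) (φ : α → β) :
    ∑ b, ((#{a ∈ s | φ a = b} : ℝ) - #s / Fintype.card β) ^ 2
      = #{p ∈ s ×ˢ s | φ p.1 = φ p.2} - (#s : ℝ) ^ 2 / Fintype.card β := by
  have hsum : ∑ b, (#{a ∈ s | φ a = b} : ℝ) = #s := by
    exact_mod_cast (card_eq_sum_card_fiberwise (by simp)).symm
  have hsq : ∑ b, (#{a ∈ s | φ a = b} : ℝ) ^ 2 = #{p ∈ s ×ˢ s | φ p.1 = φ p.2} := by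
    exact_mod_cast sum_card_filter_sq s φ
  have hβ : (Fintype.card β : ℝ) ≠ 0 := by positivity
  simp only [sub_sq, sum_add_distrib, sum_sub_distrib, ← sum_mul, ← mul_sum, hsum, hsq,
    sum_const, card_univ, nsmul_eq_mul]
  field_simp
  ring

end Fibers

lemma card_mul_card_fiber_of_surjective {G H : Type*} [AddGroup G] [Fintype G] [AddGroup H]
    [Fintype H] [DecidableEq H] (f : G →+ H) (hf : Function.Surjective f) (y : H) :
    Fintype.card H * #{g | f g = y} = Fintype.card G := by
  calc Fintype.card H * #{g | f g = y} = ∑ z, #{g | f g = z} := by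
        simp [sum_congr rfl fun z _ => AddMonoidHom.card_fiber_eq_of_mem_range f (hf z) (hf y)]
    _ = Fintype.card G := (card_eq_sum_card_fiberwise (by simp)).symm

lemma dotProduct_left_surjective {ι F : Type*} [Fintype ι] [DecidableEq ι] [Field F]
    {v : ι → F} (hv : v ≠ 0) : Function.Surjective (v ⬝ᵥ ·) := by
  obtain ⟨i, hi⟩ := Function.ne_iff.mp hv
  exact fun t => ⟨Pi.single i (t / v i), (dotProduct_single ..).trans (mul_div_cancel₀ t hi)⟩

section DotProduct

variable {ι F : Type*} [Fintype ι] [DecidableEq ι] [Field F] [Fintype F] [DecidableEq F]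

lemma card_mul_card_filter_dotProduct_eq {v : ι → F} (hv : v ≠ 0) (t : F) :
    Fintype.card F * #{e | v ⬝ᵥ e = t} = Fintype.card (ι → F) :=
  card_mul_card_fiber_of_surjective (.mk' (v ⬝ᵥ ·) (dotProduct_add v))
    (dotProduct_left_surjective hv) t

lemma card_filter_dotProduct_eq_dotProduct (x y : ι → F) :
    (#{e | x ⬝ᵥ e = y ⬝ᵥ e} : ℝ) = Fintype.card (ι → F) / Fintype.card F
      + if x = y then (Fintype.card (ι → F) - Fintype.card (ι → F) / Fintype.card F : ℝ)
        else 0 := by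
  by_cases hxy : x = y
  · simp [hxy]
  · have hq : (Fintype.card F : ℝ) ≠ 0 := by positivity
    have hfilter : #{e | x ⬝ᵥ e = y ⬝ᵥ e} = #{e | (x - y) ⬝ᵥ e = 0} := by
      simp only [sub_dotProduct, sub_eq_zero]
    rw [if_neg hxy, add_zero, hfilter, eq_div_iff hq, mul_comm]
    exact_mod_cast card_mul_card_filter_dotProduct_eq (sub_ne_zero.2 hxy) 0

lemma sum_card_filter_dotProduct_eq (s : Finset (ι → F)) :
    ∑ e, (#{p ∈ s ×ˢ s | p.1 ⬝ᵥ e = p.2 ⬝ᵥ e} : ℝ)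
      = #s ^ 2 * (Fintype.card (ι → F) / Fintype.card F)
        + #s * (Fintype.card (ι → F) - Fintype.card (ι → F) / Fintype.card F) := by
  have hswap : ∑ e, #{p ∈ s ×ˢ s | p.1 ⬝ᵥ e = p.2 ⬝ᵥ e}
      = ∑ p ∈ s ×ˢ s, #{e | p.1 ⬝ᵥ e = p.2 ⬝ᵥ e} := by
    simp only [card_filter]
    exact sum_comm
  rw [← Nat.cast_sum, hswap, Nat.cast_sum, sum_product]
  simp only [card_filter_dotProduct_eq_dotProduct, sum_add_distrib, sum_ite_eq, sum_ite_mem,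
    inter_self, sum_const, nsmul_eq_mul]
  ring

lemma sum_sum_sq_card_filter_dotProduct_sub_mean (s : Finset (ι → F)) :
    ∑ e, ∑ t, ((#{x ∈ s | x ⬝ᵥ e = t} : ℝ) - #s / Fintype.card F) ^ 2
      = #s * (Fintype.card (ι → F) - Fintype.card (ι → F) / Fintype.card F) := by
  simp only [sum_sq_card_filter_sub_mean, sum_sub_distrib, sum_card_filter_dotProduct_eq,
    sum_const, card_univ, nsmul_eq_mul]
  ring

end DotProduct

lemma nsmul_sum_image_le_sum_comp {ι κ M : Type*} [DecidableEq κ] [AddCommMonoid M]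
    [PartialOrder M] [IsOrderedAddMonoid M] {s : Finset ι} {g : ι → κ} {f : κ → M} {n : ℕ}
    (hf : ∀ b ∈ s.image g, 0 ≤ f b) (hn : ∀ b ∈ s.image g, n ≤ #{a ∈ s | g a = b}) :
    n • ∑ b ∈ s.image g, f b ≤ ∑ a ∈ s, f (g a) := by
  rw [sum_comp f g, smul_sum]
  exact sum_le_sum fun b hb => nsmul_le_nsmul_left (hf b hb) (hn b hb)

section Hyperplanes

variable {ι F : Type*} [Fintype ι] [DecidableEq ι] [Field F] [Fintype F] [DecidableEq F]

def affineHyperplane (e : ι → F) (t : F) : Finset (ι → F) := {x | x ⬝ᵥ e = t}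

variable (ι F) in
def affineHyperplanes : Finset (Finset (ι → F)) :=
  (({e | e ≠ 0} : Finset (ι → F)) ×ˢ univ).image fun p => affineHyperplane p.1 p.2

lemma card_sub_one_le_card_hyperplane_equations {e : ι → F} (he : e ≠ 0) (t : F) :
    Fintype.card F - 1 ≤ #{p ∈ ({e | e ≠ 0} : Finset (ι → F)) ×ˢ univ |
      affineHyperplane p.1 p.2 = affineHyperplane e t} := by
  rw [← card_univ, ← card_erase_of_mem (mem_univ 0)]
  refine card_le_card_of_injOn (fun c => (c • e, c * t)) (fun c hc => ?_) fun c _ c' _ h => ?_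
  · have hc : c ≠ 0 := ne_of_mem_erase hc
    simp [affineHyperplane, smul_ne_zero hc he, dotProduct_smul, hc]
  · exact smul_left_injective F he (congrArg Prod.fst h)

lemma sum_affineHyperplanes_sq_card_inter_sub_mean_le (E : Finset (ι → F)) :
    ∑ h ∈ affineHyperplanes ι F, ((#(h ∩ E) : ℝ) - #E / Fintype.card F) ^ 2
      ≤ Fintype.card (ι → F) / Fintype.card F * #E := by
  set f : Finset (ι → F) → ℝ := fun h => ((#(h ∩ E) : ℝ) - #E / Fintype.card F) ^ 2
  have hq : (1 : ℝ) < Fintype.card F := Nat.one_lt_cast.2 Fintype.one_lt_card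
  have hcount : (Fintype.card F - 1 : ℝ) * ∑ h ∈ affineHyperplanes ι F, f h
      ≤ ∑ p ∈ ({e | e ≠ 0} : Finset (ι → F)) ×ˢ univ, f (affineHyperplane p.1 p.2) := by
    have hfiber : ∀ h ∈ affineHyperplanes ι F, Fintype.card F - 1
        ≤ #{p ∈ ({e | e ≠ 0} : Finset (ι → F)) ×ˢ univ | affineHyperplane p.1 p.2 = h} := by
      rintro _ hh
      obtain ⟨⟨e, t⟩, hp, rfl⟩ := mem_image.1 hh
      exact card_sub_one_le_card_hyperplane_equations (mem_filter.1 (mem_product.1 hp).1).2 t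
    have := nsmul_sum_image_le_sum_comp (f := f) (fun h _ => sq_nonneg _) hfiber
    rwa [nsmul_eq_mul, Nat.cast_sub Fintype.card_pos, Nat.cast_one] at this
  have hsub : ∑ p ∈ ({e | e ≠ 0} : Finset (ι → F)) ×ˢ univ, f (affineHyperplane p.1 p.2)
      ≤ ∑ e, ∑ t, f (affineHyperplane e t) := by
    rw [← sum_product', univ_product_univ]
    exact sum_le_sum_of_subset_of_nonneg (subset_univ _) fun _ _ _ => sq_nonneg _
  have hvar : ∑ e, ∑ t, f (affineHyperplane e t)
      = (Fintype.card F - 1 : ℝ) * (Fintype.card (ι → F) / Fintype.card F * #E) := by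
    simp only [f, affineHyperplane, filter_inter, univ_inter]
    rw [sum_sum_sq_card_filter_dotProduct_sub_mean]
    field_simp
  exact le_of_mul_le_mul_left (hcount.trans (hsub.trans hvar.le)) (by linarith)

end Hyperplanes

lemma filter_isHyperplane_eq_affineHyperplanes {F : Type*} [Field F] [Fintype F]
    [DecidableEq F] (d : ℕ) :
    ({h | IsHyperplane h} : Finset (Finset (Fin d → F))) = affineHyperplanes (Fin d) F := by
  ext h
  simp [IsHyperplane, affineHyperplanes, affineHyperplane, dotProduct, eq_comm]

theorem variance_hyperplanes
    {F : Type*} [Field F] [Fintype F] [DecidableEq F] (q : ℕ) (hq : Fintype.card F = q)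
    (d : ℕ) (hd : 2 ≤ d) (E : Finset (Fin d → F)) :
    ∑ h ∈ Finset.univ.filter (fun h : Finset (Fin d → F) => IsHyperplane h),
        (((h ∩ E).card : ℝ) - (E.card : ℝ) / q) ^ 2
      ≤ (q : ℝ) ^ (d - 1) * E.card := by
  subst hq
  have hpow : (Fintype.card (Fin d → F) : ℝ) / Fintype.card F = Fintype.card F ^ (d - 1) := by
    rw [Fintype.card_fun, Fintype.card_fin, Nat.cast_pow, pow_sub₀ _ (by positivity) (by omega),
      pow_one, div_eq_mul_inv]
  rw [filter_isHyperplane_eq_affineHyperplanes, ← hpow]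
  exact sum_affineHyperplanes_sq_card_inter_sub_mean_le E
end

section
/- For any point set E ⊆ 𝔽_q^d and any collection 𝓗 of hyperplanes in 𝔽_q^d, the number of incidences I(E,𝓗) satisfies |I(E,𝓗) − |E||𝓗|/q| ≤ √(q^{d−1}·|E|·|𝓗|). -/
open Finset
open scoped Classical

section Aux
variable {F : Type*} [Field F] [Fintype F] [DecidableEq F] {d : ℕ}

noncomputable def dotL (v : Fin d → F) : (Fin d → F) →ₗ[F] F where
  toFun x := ∑ i, v i * x i
  map_add' x y := by simp [mul_add, Finset.sum_add_distrib]
  map_smul' c x := by simp [Finset.mul_sum, mul_left_comm]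

lemma ker_card (v : Fin d → F) (hv : v ≠ 0) :
    (univ.filter (fun e : Fin d → F => ∑ i, v i * e i = 0)).card
      = Fintype.card F ^ (d - 1) := by
  obtain ⟨j, hj⟩ : ∃ j, v j ≠ 0 := by
    by_contra h
    push_neg at h
    exact hv (funext fun i => h i)
  have hsurj : Function.Surjective (dotL v) := by
    intro t
    refine ⟨Pi.single j ((v j)⁻¹ * t), ?_⟩
    simp only [dotL, LinearMap.coe_mk, AddHom.coe_mk]
    rw [Finset.sum_eq_single j]
    · rw [Pi.single_eq_same]; field_simp
    · intro i _ hij; rw [Pi.single_eq_of_ne hij, mul_zero]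
    · intro h; exact absurd (mem_univ j) h
  have hrank : Module.finrank F (LinearMap.ker (dotL v)) = d - 1 := by
    have h1 := LinearMap.finrank_range_add_finrank_ker (dotL v)
    rw [LinearMap.range_eq_top.mpr hsurj] at h1
    simp only [finrank_top, Module.finrank_self, Module.finrank_pi, Fintype.card_fin] at h1
    omega
  have hcard : Fintype.card (LinearMap.ker (dotL v)) = Fintype.card F ^ (d - 1) := by
    rw [Module.card_eq_pow_finrank (K := F), hrank]
  rw [← hcard, ← Fintype.card_subtype]
  exact Fintype.card_congr (Equiv.subtypeEquivRight (fun e => by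
    simp [LinearMap.mem_ker, dotL]))


def Ncount (E : Finset (Fin d → F)) (e : Fin d → F) (t : F) : ℕ :=
  (E.filter (fun x => ∑ i, x i * e i = t)).card

lemma Nsum (E : Finset (Fin d → F)) (e : Fin d → F) : ∑ t, Ncount E e t = E.card := by
  unfold Ncount
  exact (Finset.card_eq_sum_card_fiberwise (t := univ) (fun x _ => mem_univ _)).symm

lemma Nsq (E : Finset (Fin d → F)) (e : Fin d → F) :
    ∑ t, (Ncount E e t)^2
      = ((E ×ˢ E).filter (fun p => ∑ i, (p.1 i - p.2 i) * e i = 0)).card := by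
  have h1 : ((E ×ˢ E).filter (fun p => ∑ i, (p.1 i - p.2 i) * e i = 0))
      = (E ×ˢ E).filter (fun p => (∑ i, p.1 i * e i) = ∑ i, p.2 i * e i) := by
    apply filter_congr
    intro p _
    simp only [sub_mul, Finset.sum_sub_distrib, sub_eq_zero]
  rw [h1, Finset.card_eq_sum_card_fiberwise
    (f := fun p : (Fin d → F) × (Fin d → F) => ∑ i, p.1 i * e i)
    (fun x _ => mem_univ _)]
  apply Finset.sum_congr rfl
  intro t _
  have h2 : ((E ×ˢ E).filter (fun p => (∑ i, p.1 i * e i) = ∑ i, p.2 i * e i)).filter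
        (fun p => ∑ i, p.1 i * e i = t)
      = (E ×ˢ E).filter (fun p => (∑ i, p.1 i * e i = t) ∧ (∑ i, p.2 i * e i = t)) := by
    rw [Finset.filter_filter]
    apply filter_congr
    intro p _
    constructor
    · rintro ⟨h, h'⟩; exact ⟨h', h ▸ h'⟩
    · rintro ⟨h, h'⟩; exact ⟨h.trans h'.symm, h⟩
  have h3 : (E ×ˢ E).filter (fun p => (∑ i, p.1 i * e i = t) ∧ (∑ i, p.2 i * e i = t))
      = (E.filter (fun x => ∑ i, x i * e i = t)) ×ˢ (E.filter (fun x => ∑ i, x i * e i = t)) := by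
    ext p
    simp only [Finset.mem_filter, Finset.mem_product]
    tauto
  rw [h2, h3, Finset.card_product, Ncount, sq]

lemma SumAll (E : Finset (Fin d → F)) :
    ∑ e : Fin d → F, (((E ×ˢ E).filter (fun p => ∑ i, (p.1 i - p.2 i) * e i = 0)).card : ℝ)
      = (E.card : ℝ) * (Fintype.card F : ℝ)^d
        + ((E.card : ℝ)^2 - E.card) * (Fintype.card F : ℝ)^(d-1) := by
  have step1 : ∑ e : Fin d → F,
      (((E ×ˢ E).filter (fun p => ∑ i, (p.1 i - p.2 i) * e i = 0)).card : ℝ)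
      = ∑ p ∈ E ×ˢ E,
        ((univ.filter (fun e : Fin d → F => ∑ i, (p.1 i - p.2 i) * e i = 0)).card : ℝ) := by
    simp only [Finset.card_filter]
    push_cast
    rw [Finset.sum_comm]
  rw [step1]
  have hval : ∀ p ∈ E ×ˢ E,
      ((univ.filter (fun e : Fin d → F => ∑ i, (p.1 i - p.2 i) * e i = 0)).card : ℝ)
      = if p.1 = p.2 then (Fintype.card F : ℝ)^d else (Fintype.card F : ℝ)^(d-1) := by
    intro p _
    by_cases hp : p.1 = p.2
    · simp only [hp, if_pos, sub_self, zero_mul, Finset.sum_const_zero, Finset.filter_true,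
        if_true]
      simp [Finset.card_univ, Fintype.card_fun]
    · rw [if_neg hp]
      have hv : p.1 - p.2 ≠ 0 := sub_ne_zero.mpr hp
      have := ker_card (p.1 - p.2) hv
      simp only [Pi.sub_apply] at this
      rw [this]
      push_cast
      ring
  rw [Finset.sum_congr rfl hval, Finset.sum_ite, Finset.sum_const, Finset.sum_const]
  have hdiag : (E ×ˢ E).filter (fun p => p.1 = p.2) = E.diag := by
    ext p
    simp only [Finset.mem_diag, Finset.mem_product, Finset.mem_filter]
    constructor
    · rintro ⟨⟨h1, _⟩, h3⟩; exact ⟨h1, h3⟩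
    · rintro ⟨h1, h3⟩; exact ⟨⟨h1, h3 ▸ h1⟩, h3⟩
  have hd1 : ((E ×ˢ E).filter (fun p => p.1 = p.2)).card = E.card := by
    rw [hdiag, Finset.diag_card]
  have hle : E.card ≤ E.card * E.card := by
    rcases Nat.eq_zero_or_pos E.card with h | h
    · simp [h]
    · exact Nat.le_mul_of_pos_left _ h
  have hd2 : ((E ×ˢ E).filter (fun p => ¬ p.1 = p.2)).card = E.card * E.card - E.card := by
    have := Finset.card_filter_add_card_filter_not
      (s := E ×ˢ E) (p := fun p => p.1 = p.2)
    rw [hd1, Finset.card_product] at this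
    omega
  rw [hd1, hd2, nsmul_eq_mul, nsmul_eq_mul]
  rw [Nat.cast_sub hle]
  push_cast
  ring

lemma hyp_scale (e : Fin d → F) (t l : F) (hl : l ≠ 0) :
    univ.filter (fun x : Fin d → F => ∑ i, x i * (l • e) i = l * t)
      = univ.filter (fun x : Fin d → F => ∑ i, x i * e i = t) := by
  apply filter_congr
  intro x _
  simp only [Pi.smul_apply, smul_eq_mul]
  rw [show (∑ i, x i * (l * e i)) = l * ∑ i, x i * e i from by
    rw [Finset.mul_sum]; exact Finset.sum_congr rfl fun i _ => by ring]
  exact mul_right_inj' hl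

lemma inter_eq_filter (E : Finset (Fin d → F)) (e : Fin d → F) (t : F) :
    (univ.filter (fun x : Fin d → F => ∑ i, x i * e i = t)) ∩ E
      = E.filter (fun x => ∑ i, x i * e i = t) := by
  ext x
  simp only [Finset.mem_inter, Finset.mem_filter, Finset.mem_univ, true_and]
  tauto

end Aux
theorem vinh_point_hyperplane_incidence
    {F : Type*} [Field F] [Fintype F] [DecidableEq F] (q : ℕ) (hq : Fintype.card F = q)
    (d : ℕ) (hd : 2 ≤ d) (E : Finset (Fin d → F)) (𝓗 : Finset (Finset (Fin d → F)))
    (h𝓗 : ∀ h ∈ 𝓗, IsHyperplane h) :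
    |(∑ h ∈ 𝓗, ((h ∩ E).card : ℝ)) - (E.card : ℝ) * 𝓗.card / q|
      ≤ Real.sqrt ((q : ℝ) ^ (d - 1) * E.card * 𝓗.card) := by
  classical
  have hq1 : 1 < q := hq ▸ Fintype.one_lt_card
  have hQ0 : (0:ℝ) < (q:ℝ) := by exact_mod_cast Nat.lt_of_lt_of_le Nat.zero_lt_one hq1.le
  have hQ2 : (2:ℝ) ≤ (q:ℝ) := by exact_mod_cast hq1
  have hQd : ((q:ℝ))^d = (q:ℝ) * (q:ℝ)^(d-1) := by
    rw [← pow_succ']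
    congr 1
    omega
  choose e₀ hene t₀ hset using h𝓗
  -- real sum of N over t
  have hNsumR : ∀ e : Fin d → F, ∑ t, (Ncount E e t : ℝ) = (E.card : ℝ) := by
    intro e
    rw [← Nat.cast_sum]
    exact_mod_cast congrArg (Nat.cast (R := ℝ)) (Nsum E e)
  -- expansion of second moment for fixed e
  have hexp : ∀ e : Fin d → F,
      ∑ t, ((Ncount E e t : ℝ) - (E.card:ℝ)/q)^2
        = (∑ t, (Ncount E e t : ℝ)^2) - 2*((E.card:ℝ)/q)*(E.card:ℝ)
          + (q:ℝ)*((E.card:ℝ)/q)^2 := by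
    intro e
    have h1 : ∀ t : F, ((Ncount E e t : ℝ) - (E.card:ℝ)/q)^2
        = (Ncount E e t:ℝ)^2 - 2*((E.card:ℝ)/q)*(Ncount E e t:ℝ) + ((E.card:ℝ)/q)^2 :=
      fun t => by ring
    rw [Finset.sum_congr rfl (fun t _ => h1 t), Finset.sum_add_distrib,
      Finset.sum_sub_distrib, ← Finset.mul_sum, hNsumR, Finset.sum_const,
      Finset.card_univ, hq, nsmul_eq_mul]
  -- total second moment over all e
  have hBR : ∑ e : Fin d → F, ∑ t, (Ncount E e t : ℝ)^2
      = (E.card:ℝ) * (q:ℝ)^d + ((E.card:ℝ)^2 - (E.card:ℝ)) * (q:ℝ)^(d-1) := by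
    have h2 : ∀ e : Fin d → F, ∑ t, (Ncount E e t:ℝ)^2
        = (((E ×ˢ E).filter (fun p => ∑ i, (p.1 i - p.2 i) * e i = 0)).card : ℝ) := by
      intro e
      exact_mod_cast congrArg (Nat.cast (R := ℝ)) (Nsq E e)
    rw [Finset.sum_congr rfl (fun e _ => h2 e), SumAll E, hq]
  -- sum over all e of the centered second moment
  have hS_all : ∑ e : Fin d → F, ∑ t, ((Ncount E e t : ℝ) - (E.card:ℝ)/q)^2
      = ((E.card:ℝ) * (q:ℝ)^(d-1)) * ((q:ℝ) - 1) := by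
    rw [Finset.sum_congr rfl (fun e _ => hexp e), Finset.sum_add_distrib,
      Finset.sum_sub_distrib, Finset.sum_const, Finset.sum_const, Finset.card_univ,
      Fintype.card_fun, Fintype.card_fin, hq, nsmul_eq_mul, nsmul_eq_mul, hBR]
    push_cast
    rw [hQd]
    field_simp
    ring
  -- split off e = 0
  have hsplit : (∑ e ∈ univ.filter (fun e : Fin d → F => e ≠ 0),
        ∑ t, ((Ncount E e t : ℝ) - (E.card:ℝ)/q)^2)
      + ∑ t, ((Ncount E (0 : Fin d → F) t : ℝ) - (E.card:ℝ)/q)^2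
      = ∑ e : Fin d → F, ∑ t, ((Ncount E e t : ℝ) - (E.card:ℝ)/q)^2 := by
    have h0 : univ.filter (fun e : Fin d → F => ¬ e ≠ 0) = {0} := by
      ext e; simp [not_not]
    have := Finset.sum_filter_add_sum_filter_not univ (fun e : Fin d → F => e ≠ 0)
      (fun e => ∑ t, ((Ncount E e t : ℝ) - (E.card:ℝ)/q)^2)
    rwa [h0, Finset.sum_singleton] at this
  -- bound on the nonzero-e part
  have hSbound : ∑ e ∈ univ.filter (fun e : Fin d → F => e ≠ 0),
        ∑ t, ((Ncount E e t : ℝ) - (E.card:ℝ)/q)^2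
      ≤ ((E.card:ℝ) * (q:ℝ)^(d-1)) * ((q:ℝ) - 1) := by
    have h1 := hsplit
    rw [hS_all] at h1
    have hZ : (0:ℝ) ≤ ∑ t, ((Ncount E (0 : Fin d → F) t : ℝ) - (E.card:ℝ)/q)^2 :=
      Finset.sum_nonneg fun t _ => sq_nonneg _
    linarith
  -- the scaling injection step
  have hstep2 : ((q:ℝ) - 1) * ∑ h ∈ 𝓗, (((h ∩ E).card : ℝ) - (E.card:ℝ)/q)^2
      ≤ ∑ e ∈ univ.filter (fun e : Fin d → F => e ≠ 0),
          ∑ t, ((Ncount E e t : ℝ) - (E.card:ℝ)/q)^2 := by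
    set Λ : Finset F := univ.filter (fun l : F => l ≠ 0) with hΛdef
    have hΛcard : (Λ.card : ℝ) = (q:ℝ) - 1 := by
      have h1 : Λ = Finset.univ.erase (0:F) := by
        ext l; simp [hΛdef, Finset.mem_erase]
      rw [h1, Finset.card_erase_of_mem (Finset.mem_univ _), Finset.card_univ, hq,
        Nat.cast_sub hq1.le, Nat.cast_one]
    set Φ : {h // h ∈ 𝓗} × F → (Fin d → F) × F :=
      fun p => (p.2 • e₀ p.1.1 p.1.2, p.2 * t₀ p.1.1 p.1.2) with hΦdef
    have hΦset : ∀ (h : {h // h ∈ 𝓗}) (l : F), l ≠ 0 →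
        univ.filter (fun x : Fin d → F =>
          ∑ i, x i * (l • e₀ h.1 h.2) i = l * t₀ h.1 h.2) = h.1 := by
      intro h l hl
      rw [hyp_scale _ _ _ hl, ← hset h.1 h.2]
    have hΦN : ∀ (h : {h // h ∈ 𝓗}) (l : F), l ≠ 0 →
        (Ncount E (l • e₀ h.1 h.2) (l * t₀ h.1 h.2) : ℝ) = ((h.1 ∩ E).card : ℝ) := by
      intro h l hl
      have h1 : E.filter (fun x => ∑ i, x i * (l • e₀ h.1 h.2) i = l * t₀ h.1 h.2)
          = h.1 ∩ E := by
        rw [← inter_eq_filter, hΦset h l hl]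
      unfold Ncount
      rw [h1]
    -- the domain of summation
    set D : Finset ({h // h ∈ 𝓗} × F) := 𝓗.attach ×ˢ Λ with hDdef
    have hGsum : ∑ p ∈ D, ((Ncount E (Φ p).1 (Φ p).2 : ℝ) - (E.card:ℝ)/q)^2
        = ((q:ℝ) - 1) * ∑ h ∈ 𝓗, (((h ∩ E).card : ℝ) - (E.card:ℝ)/q)^2 := by
      rw [hDdef, Finset.sum_product]
      have h1 : ∀ h : {h // h ∈ 𝓗},
          ∑ l ∈ Λ, ((Ncount E (Φ (h, l)).1 (Φ (h, l)).2 : ℝ) - (E.card:ℝ)/q)^2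
            = ((q:ℝ) - 1) * (((h.1 ∩ E).card : ℝ) - (E.card:ℝ)/q)^2 := by
        intro h
        rw [Finset.sum_congr rfl (fun l hl => by
          have hl0 : l ≠ 0 := by
            rw [hΛdef] at hl; exact (Finset.mem_filter.mp hl).2
          rw [show ((Ncount E (Φ (h, l)).1 (Φ (h, l)).2 : ℝ) - (E.card:ℝ)/q)^2
              = (((h.1 ∩ E).card : ℝ) - (E.card:ℝ)/q)^2 from by
            rw [hΦdef]; simp only; rw [hΦN h l hl0]])]
        rw [Finset.sum_const, nsmul_eq_mul, hΛcard]
      rw [Finset.sum_congr rfl (fun h _ => h1 h), ← Finset.mul_sum]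
      congr 1
      exact Finset.sum_attach 𝓗 (fun h => (((h ∩ E).card : ℝ) - (E.card:ℝ)/q)^2)
    have hinj : ∀ p ∈ D, ∀ p' ∈ D, Φ p = Φ p' → p = p' := by
      rintro ⟨h1, l1⟩ hm1 ⟨h2, l2⟩ hm2 heq
      rw [hDdef, Finset.mem_product] at hm1 hm2
      have hl1 : l1 ≠ 0 := by
        have := hm1.2; rw [hΛdef, Finset.mem_filter] at this; exact this.2
      have hl2 : l2 ≠ 0 := by
        have := hm2.2; rw [hΛdef, Finset.mem_filter] at this; exact this.2
      have heq1 : l1 • e₀ h1.1 h1.2 = l2 • e₀ h2.1 h2.2 := congrArg Prod.fst heq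
      have heq2 : l1 * t₀ h1.1 h1.2 = l2 * t₀ h2.1 h2.2 := congrArg Prod.snd heq
      have hh : h1.1 = h2.1 := by
        rw [← hΦset h1 l1 hl1, ← hΦset h2 l2 hl2, heq1, heq2]
      have hhs : h1 = h2 := Subtype.ext hh
      subst hhs
      obtain ⟨j, hj⟩ : ∃ j, e₀ h1.1 h1.2 j ≠ 0 := by
        by_contra hcon
        push_neg at hcon
        exact hene h1.1 h1.2 (funext fun i => hcon i)
      have hll : l1 = l2 := by
        have := congrFun heq1 j
        simp only [Pi.smul_apply, smul_eq_mul] at this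
        exact mul_right_cancel₀ hj this
      rw [hll]
    have himage : ∑ p ∈ D, ((Ncount E (Φ p).1 (Φ p).2 : ℝ) - (E.card:ℝ)/q)^2
        = ∑ p ∈ D.image Φ, ((Ncount E p.1 p.2 : ℝ) - (E.card:ℝ)/q)^2 :=
      (Finset.sum_image (g := Φ) (f := fun p : (Fin d → F) × F => ((Ncount E p.1 p.2 : ℝ) - (E.card:ℝ)/(q:ℝ))^2) hinj).symm
    have hsub : D.image Φ ⊆ (univ.filter (fun e : Fin d → F => e ≠ 0)) ×ˢ univ := by
      intro p hp
      rw [Finset.mem_image] at hp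
      obtain ⟨⟨h, l⟩, hm, rfl⟩ := hp
      rw [hDdef, Finset.mem_product] at hm
      have hl : l ≠ 0 := by
        have := hm.2; rw [hΛdef, Finset.mem_filter] at this; exact this.2
      rw [Finset.mem_product, Finset.mem_filter]
      exact ⟨⟨Finset.mem_univ _, smul_ne_zero hl (hene h.1 h.2)⟩, Finset.mem_univ _⟩
    have hle : ∑ p ∈ D.image Φ, ((Ncount E p.1 p.2 : ℝ) - (E.card:ℝ)/q)^2
        ≤ ∑ p ∈ (univ.filter (fun e : Fin d → F => e ≠ 0)) ×ˢ univ,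
            ((Ncount E p.1 p.2 : ℝ) - (E.card:ℝ)/q)^2 :=
      Finset.sum_le_sum_of_subset_of_nonneg hsub (fun p _ _ => sq_nonneg _)
    have hprod : ∑ p ∈ (univ.filter (fun e : Fin d → F => e ≠ 0)) ×ˢ univ,
          ((Ncount E p.1 p.2 : ℝ) - (E.card:ℝ)/q)^2
        = ∑ e ∈ univ.filter (fun e : Fin d → F => e ≠ 0),
            ∑ t, ((Ncount E e t : ℝ) - (E.card:ℝ)/q)^2 :=
      Finset.sum_product _ _ _
    rw [← hGsum, himage, ← hprod]
    exact hle
  -- Cauchy–Schwarz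
  have hCS := sq_sum_le_card_mul_sum_sq (s := 𝓗)
    (f := fun h => (((h ∩ E).card : ℝ) - (E.card:ℝ)/q))
  have hfsq : ∑ h ∈ 𝓗, (((h ∩ E).card : ℝ) - (E.card:ℝ)/q)^2 ≤ (q:ℝ)^(d-1) * E.card := by
    have h1 := le_trans hstep2 hSbound
    nlinarith [h1, hQ2]
  have hsum_f : ∑ h ∈ 𝓗, (((h ∩ E).card : ℝ) - (E.card:ℝ)/q)
      = (∑ h ∈ 𝓗, ((h ∩ E).card : ℝ)) - (E.card : ℝ) * 𝓗.card / q := by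
    rw [Finset.sum_sub_distrib, Finset.sum_const, nsmul_eq_mul]
    ring
  apply Real.abs_le_sqrt
  rw [← hsum_f]
  calc (∑ h ∈ 𝓗, (((h ∩ E).card : ℝ) - (E.card:ℝ)/q))^2
      ≤ (𝓗.card : ℝ) * ∑ h ∈ 𝓗, (((h ∩ E).card : ℝ) - (E.card:ℝ)/q)^2 := hCS
    _ ≤ (𝓗.card : ℝ) * ((q:ℝ)^(d-1) * E.card) := by
        exact mul_le_mul_of_nonneg_left hfsq (Nat.cast_nonneg _)
    _ = (q : ℝ) ^ (d - 1) * E.card * 𝓗.card := by ring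
end

section
/- Let E ⊆ 𝔽_q². If |E|·|Dir(E)| > q², then there exists e ∈ E such that |{u·e : u ∈ E}| > q/2. -/
open Finset
open scoped Classical

/-- The set of directions determined by `E ⊆ 𝔽_q²`: those `θ` such that `(λ, λθ) ∈ E`
for some `λ ≠ 0`. -/
noncomputable def dirSet {F : Type*} [Field F] [Fintype F] [DecidableEq F]
    (E : Finset (F × F)) : Finset F :=
  Finset.univ.filter (fun θ : F => ∃ l : F, l ≠ 0 ∧ (l, l * θ) ∈ E)

section Aux

variable {F : Type*} [Field F] [Fintype F] [DecidableEq F]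

/-- Number of pairs in `E × E` with equal value of `u ↦ u.1 + θ * u.2`. -/
noncomputable def Nsum_s11 (E : Finset (F × F)) (θ : F) : ℕ :=
  ∑ t : F, (E.filter fun u => u.1 + θ * u.2 = t).card ^ 2

/-- Number of pairs in `E × E` with equal second coordinate. -/
noncomputable def Ninf (E : Finset (F × F)) : ℕ :=
  ∑ t : F, (E.filter fun u => u.2 = t).card ^ 2

lemma sum_sq_fiber (E : Finset (F × F)) (f : F × F → F) :
    ∑ t : F, (E.filter fun u => f u = t).card ^ 2
      = ((E ×ˢ E).filter fun p => f p.1 = f p.2).card := by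
  rw [Finset.card_eq_sum_card_fiberwise
    (f := fun p : (F × F) × (F × F) => f p.1) (t := Finset.univ) (fun _ _ => mem_univ _)]
  refine Finset.sum_congr rfl fun t _ => ?_
  have hset : (((E ×ˢ E).filter fun p => f p.1 = f p.2).filter fun p => f p.1 = t)
      = (E.filter fun u => f u = t) ×ˢ (E.filter fun u => f u = t) := by
    ext p
    simp only [Finset.mem_filter, Finset.mem_product]
    constructor
    · rintro ⟨⟨⟨h1, h2⟩, h3⟩, h4⟩
      exact ⟨⟨h1, h4⟩, ⟨h2, h3 ▸ h4⟩⟩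
    · rintro ⟨⟨h1, h4⟩, ⟨h2, h5⟩⟩
      exact ⟨⟨⟨h1, h2⟩, h4.trans h5.symm⟩, h4⟩
  rw [hset, Finset.card_product, sq]

lemma nsum_eq_pairs (E : Finset (F × F)) (θ : F) :
    Nsum_s11 E θ = ((E ×ˢ E).filter fun p => p.1.1 + θ * p.1.2 = p.2.1 + θ * p.2.2).card :=
  sum_sq_fiber E (fun u => u.1 + θ * u.2)

lemma ninf_eq_pairs (E : Finset (F × F)) :
    Ninf E = ((E ×ˢ E).filter fun p => p.1.2 = p.2.2).card :=
  sum_sq_fiber E (fun u => u.2)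

lemma perpair (u v : F × F) :
    (∑ θ : F, if u.1 + θ * u.2 = v.1 + θ * v.2 then 1 else 0)
      + (if u.2 = v.2 then 1 else 0)
      = if u = v then Fintype.card F + 1 else (1 : ℕ) := by
  have hcard : (∑ θ : F, if u.1 + θ * u.2 = v.1 + θ * v.2 then 1 else 0)
      = (Finset.univ.filter fun θ : F => u.1 + θ * u.2 = v.1 + θ * v.2).card := by
    rw [Finset.card_filter]
  by_cases huv : u = v
  · subst huv
    simp [Finset.card_univ]
  · rw [hcard]
    by_cases h2 : u.2 = v.2
    · have h1 : u.1 ≠ v.1 := by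
        intro h1
        exact huv (Prod.ext h1 h2)
      have : (Finset.univ.filter fun θ : F => u.1 + θ * u.2 = v.1 + θ * v.2) = ∅ := by
        ext θ
        simp only [Finset.mem_filter, Finset.mem_univ, true_and, Finset.notMem_empty,
          iff_false]
        rw [h2]
        intro hh
        exact h1 (by linear_combination hh)
      rw [this]
      simp [h2, huv]
    · have hne : u.2 - v.2 ≠ 0 := sub_ne_zero.2 h2
      have : (Finset.univ.filter fun θ : F => u.1 + θ * u.2 = v.1 + θ * v.2)
          = {(v.1 - u.1) / (u.2 - v.2)} := by
        ext θ
        simp only [Finset.mem_filter, Finset.mem_univ, true_and, Finset.mem_singleton]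
        rw [eq_div_iff hne]
        constructor
        · intro hh; linear_combination hh
        · intro hh; linear_combination hh
      simp [this, huv, h2]

lemma diagPairs_card (E : Finset (F × F)) :
    ((E ×ˢ E).filter fun p => p.1 = p.2).card = E.card := by
  have : ((E ×ˢ E).filter fun p => p.1 = p.2) = E.image (fun u => (u, u)) := by
    ext p
    simp only [Finset.mem_filter, Finset.mem_product, Finset.mem_image]
    constructor
    · rintro ⟨⟨h1, h2⟩, h3⟩
      exact ⟨p.1, h1, Prod.ext rfl h3⟩
    · rintro ⟨a, ha, rfl⟩
      exact ⟨⟨ha, ha⟩, rfl⟩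
  rw [this, Finset.card_image_of_injective]
  intro a b hab
  exact (Prod.mk.injEq _ _ _ _ ▸ hab).1

lemma total_identity (E : Finset (F × F)) :
    (∑ θ : F, Nsum_s11 E θ) + Ninf E
      = Fintype.card F * E.card + E.card * E.card := by
  classical
  set q := Fintype.card F
  set n := E.card
  have hswap : (∑ θ : F, Nsum_s11 E θ) + Ninf E
      = ∑ p ∈ E ×ˢ E, ((∑ θ : F, if p.1.1 + θ * p.1.2 = p.2.1 + θ * p.2.2 then 1 else 0)
          + (if p.1.2 = p.2.2 then 1 else 0)) := by
    rw [Finset.sum_add_distrib]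
    congr 1
    · have : ∀ θ : F, Nsum_s11 E θ
          = ∑ p ∈ E ×ˢ E, if p.1.1 + θ * p.1.2 = p.2.1 + θ * p.2.2 then 1 else 0 := by
        intro θ
        rw [nsum_eq_pairs, Finset.card_filter]
      rw [Finset.sum_congr rfl fun θ _ => this θ, Finset.sum_comm]
    · rw [ninf_eq_pairs, Finset.card_filter]
  rw [hswap]
  have hpp : ∀ p ∈ E ×ˢ E,
      ((∑ θ : F, if p.1.1 + θ * p.1.2 = p.2.1 + θ * p.2.2 then 1 else 0)
          + (if p.1.2 = p.2.2 then 1 else 0))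
        = if p.1 = p.2 then q + 1 else (1 : ℕ) := fun p _ => perpair p.1 p.2
  rw [Finset.sum_congr rfl hpp, Finset.sum_ite, Finset.sum_const, Finset.sum_const,
    smul_eq_mul, smul_eq_mul, diagPairs_card]
  have hsplit : ((E ×ˢ E).filter fun p => p.1 = p.2).card
      + ((E ×ˢ E).filter fun p => ¬ p.1 = p.2).card = n * n := by
    rw [Finset.card_filter_add_card_filter_not, Finset.card_product]
  rw [diagPairs_card] at hsplit
  have hn2 : n ≤ n * n := by
    rcases Nat.eq_zero_or_pos n with h | h
    · simp [h]
    · exact Nat.le_mul_of_pos_left n h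
  have hc2 : ((E ×ˢ E).filter fun p => ¬ p.1 = p.2).card = n * n - n := by omega
  rw [hc2, mul_one]
  have : n * (q + 1) = q * n + n := by ring
  rw [this, Nat.add_assoc, Nat.add_sub_cancel' hn2]

lemma cs_card (E : Finset (F × F)) (θ : F) :
    E.card ^ 2 ≤ Fintype.card F * Nsum_s11 E θ := by
  have hsum : ∑ t : F, (E.filter fun u => u.1 + θ * u.2 = t).card = E.card :=
    (Finset.card_eq_sum_card_fiberwise (fun u _ => Finset.mem_univ _)).symm
  calc E.card ^ 2 = (∑ t : F, (E.filter fun u => u.1 + θ * u.2 = t).card) ^ 2 := by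
        rw [hsum]
    _ ≤ Finset.univ.card * ∑ t : F, (E.filter fun u => u.1 + θ * u.2 = t).card ^ 2 :=
        sq_sum_le_card_mul_sum_sq
    _ = Fintype.card F * Nsum_s11 E θ := by rw [Finset.card_univ]; rfl

lemma cs_card_inf (E : Finset (F × F)) :
    E.card ^ 2 ≤ Fintype.card F * Ninf E := by
  have hsum : ∑ t : F, (E.filter fun u => u.2 = t).card = E.card :=
    (Finset.card_eq_sum_card_fiberwise (fun u _ => Finset.mem_univ _)).symm
  calc E.card ^ 2 = (∑ t : F, (E.filter fun u => u.2 = t).card) ^ 2 := by rw [hsum]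
    _ ≤ Finset.univ.card * ∑ t : F, (E.filter fun u => u.2 = t).card ^ 2 :=
        sq_sum_le_card_mul_sum_sq
    _ = Fintype.card F * Ninf E := by rw [Finset.card_univ]; rfl

lemma cs_image (E : Finset (F × F)) (θ : F) :
    E.card ^ 2 ≤ (E.image fun u => u.1 + θ * u.2).card * Nsum_s11 E θ := by
  set I := E.image fun u => u.1 + θ * u.2 with hI
  have hsum : ∑ t ∈ I, (E.filter fun u => u.1 + θ * u.2 = t).card = E.card :=
    (Finset.card_eq_sum_card_fiberwise (fun u hu => Finset.mem_image_of_mem _ hu)).symm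
  calc E.card ^ 2 = (∑ t ∈ I, (E.filter fun u => u.1 + θ * u.2 = t).card) ^ 2 := by
        rw [hsum]
    _ ≤ I.card * ∑ t ∈ I, (E.filter fun u => u.1 + θ * u.2 = t).card ^ 2 :=
        sq_sum_le_card_mul_sum_sq
    _ ≤ I.card * ∑ t : F, (E.filter fun u => u.1 + θ * u.2 = t).card ^ 2 := by
        exact Nat.mul_le_mul_left _ (Finset.sum_le_sum_of_subset (Finset.subset_univ I))
    _ = I.card * Nsum_s11 E θ := rfl

end Aux

set_option maxHeartbeats 1000000 in
theorem pinned_dot_products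
    {F : Type*} [Field F] [Fintype F] [DecidableEq F] (q : ℕ) (hq : Fintype.card F = q)
    (E : Finset (F × F)) (h : E.card * (dirSet E).card > q ^ 2) :
    ∃ e ∈ E, ((E.image (fun u : F × F => u.1 * e.1 + u.2 * e.2)).card : ℝ)
      > (q : ℝ) / 2 := by
  classical
  subst hq
  set q := Fintype.card F with hqdef
  set n := E.card with hndef
  set D := dirSet E with hDdef
  set d := D.card with hddef
  have hq2 : q ^ 2 < n * d := h
  have hd : 0 < d := by
    rcases Nat.eq_zero_or_pos d with h0 | h0
    · rw [h0, Nat.mul_zero] at hq2; exact absurd hq2 (Nat.not_lt_zero _)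
    · exact h0
  have hn : 0 < n := by
    rcases Nat.eq_zero_or_pos n with h0 | h0
    · rw [h0, Nat.zero_mul] at hq2; exact absurd hq2 (Nat.not_lt_zero _)
    · exact h0
  have hdq : d ≤ q := by
    have := Finset.card_le_card (Finset.subset_univ D)
    rwa [Finset.card_univ] at this
  -- choose the minimizing direction
  obtain ⟨θ₀, hθ₀D, hmin⟩ := D.exists_min_image (Nsum_s11 E) (Finset.card_pos.mp hd)
  -- pigeonhole bound
  have hsum1 : d * Nsum_s11 E θ₀ ≤ ∑ θ ∈ D, Nsum_s11 E θ := by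
    have := Finset.card_nsmul_le_sum D (Nsum_s11 E) (Nsum_s11 E θ₀) hmin
    simpa [smul_eq_mul] using this
  have hsplit : (∑ θ ∈ D, Nsum_s11 E θ) + ∑ θ ∈ Finset.univ \ D, Nsum_s11 E θ
      = ∑ θ : F, Nsum_s11 E θ := by
    rw [add_comm, Finset.sum_sdiff (Finset.subset_univ D)]
  have hcompl : (q - d) * n ^ 2 ≤ q * ∑ θ ∈ Finset.univ \ D, Nsum_s11 E θ := by
    have hcard : (Finset.univ \ D).card = q - d := by
      rw [Finset.card_sdiff_of_subset (Finset.subset_univ D), Finset.card_univ]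
    calc (q - d) * n ^ 2 = ∑ _θ ∈ Finset.univ \ D, n ^ 2 := by
          rw [Finset.sum_const, smul_eq_mul, hcard]
      _ ≤ ∑ θ ∈ Finset.univ \ D, q * Nsum_s11 E θ :=
          Finset.sum_le_sum fun θ _ => cs_card E θ
      _ = q * ∑ θ ∈ Finset.univ \ D, Nsum_s11 E θ := by rw [Finset.mul_sum]
  have hNinf : n ^ 2 ≤ q * Ninf E := cs_card_inf E
  have key : q * (d * Nsum_s11 E θ₀) + (q - d) * n ^ 2 + n ^ 2
      ≤ q * (q * n + n * n) := by
    calc q * (d * Nsum_s11 E θ₀) + (q - d) * n ^ 2 + n ^ 2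
        ≤ q * (∑ θ ∈ D, Nsum_s11 E θ) + q * (∑ θ ∈ Finset.univ \ D, Nsum_s11 E θ)
            + q * Ninf E := by
          exact Nat.add_le_add (Nat.add_le_add (Nat.mul_le_mul_left q hsum1) hcompl) hNinf
      _ = q * ((∑ θ : F, Nsum_s11 E θ) + Ninf E) := by
          rw [← Nat.mul_add, ← Nat.mul_add, hsplit]
      _ = q * (q * n + n * n) := by rw [total_identity]
  -- the chosen pinned point
  have hθ₀ : ∃ l : F, l ≠ 0 ∧ (l, l * θ₀) ∈ E := by
    have := hθ₀D
    rw [hDdef, dirSet, Finset.mem_filter] at this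
    exact this.2
  obtain ⟨l, hl, hlE⟩ := hθ₀
  refine ⟨(l, l * θ₀), hlE, ?_⟩
  -- the image has the same cardinality as the image of u ↦ u.1 + θ₀ * u.2
  set V := (E.image fun u => u.1 + θ₀ * u.2).card with hVdef
  have himg : (E.image (fun u : F × F => u.1 * (l, l * θ₀).1 + u.2 * (l, l * θ₀).2)).card
      = V := by
    have hfun : (fun u : F × F => u.1 * (l, l * θ₀).1 + u.2 * (l, l * θ₀).2)
        = (fun t => l * t) ∘ (fun u : F × F => u.1 + θ₀ * u.2) := by
      funext u
      simp only [Function.comp_apply]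
      ring
    rw [hfun, ← Finset.image_image, Finset.card_image_of_injective _
      (mul_right_injective₀ hl)]
  rw [himg]
  have hVN : n ^ 2 ≤ V * Nsum_s11 E θ₀ := cs_image E θ₀
  have hV : 0 < V := by
    have hne : (E.image fun u => u.1 + θ₀ * u.2).Nonempty :=
      (Finset.card_pos.mp hn).image _
    exact Finset.card_pos.mpr hne
  -- final arithmetic over ℝ
  set N := Nsum_s11 E θ₀ with hNdef
  have hq2' : (q : ℝ) ^ 2 + 1 ≤ (n : ℝ) * d := by
    have : q ^ 2 + 1 ≤ n * d := hq2
    exact_mod_cast this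
  have hkeyR : (q : ℝ) * (d * N) + ((q : ℝ) - d) * n ^ 2 + n ^ 2
      ≤ q * (q * n + n * n) := by
    have := key
    have hcast : ((q - d : ℕ) : ℝ) = (q : ℝ) - (d : ℝ) := Nat.cast_sub hdq
    calc (q : ℝ) * (d * N) + ((q : ℝ) - d) * n ^ 2 + n ^ 2
        = ((q * (d * N) + (q - d) * n ^ 2 + n ^ 2 : ℕ) : ℝ) := by
          push_cast [hcast]; ring
      _ ≤ ((q * (q * n + n * n) : ℕ) : ℝ) := by exact_mod_cast key
      _ = (q : ℝ) * (q * n + n * n) := by push_cast; ring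
  have hVNR : (n : ℝ) ^ 2 ≤ (V : ℝ) * N := by exact_mod_cast hVN
  have hnR : (1 : ℝ) ≤ n := by exact_mod_cast hn
  have hVR : (1 : ℝ) ≤ V := by exact_mod_cast hV
  have hdR : (1 : ℝ) ≤ d := by exact_mod_cast hd
  have hqR : (0 : ℝ) ≤ q := by positivity
  -- qdN ≤ q²n + dn² − n²
  have hV0 : (0 : ℝ) < V := by exact_mod_cast hV
  have hn0 : (0 : ℝ) < n := by exact_mod_cast hn
  have hd0 : (0 : ℝ) < d := by exact_mod_cast hd
  have e1 : (q : ℝ) * (d * N) ≤ q ^ 2 * n + (d : ℝ) * n ^ 2 - n ^ 2 := by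
    nlinarith [hkeyR]
  -- q²n ≤ dn² − n
  have e2 : (q : ℝ) ^ 2 * n ≤ (d : ℝ) * n ^ 2 - n := by
    have := mul_le_mul_of_nonneg_right hq2' (le_of_lt hn0)
    nlinarith [this]
  have e3 : (q : ℝ) * (d * N) ≤ 2 * (d * n ^ 2) - n ^ 2 - n := by linarith [e1, e2]
  -- multiply hVNR by q*d
  have e4 : (q : ℝ) * d * n ^ 2 ≤ (V : ℝ) * (q * (d * N)) := by
    have h0 : (0 : ℝ) ≤ q * d := by positivity
    have := mul_le_mul_of_nonneg_left hVNR h0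
    nlinarith [this]
  have e5 : (q : ℝ) * (d * n ^ 2) < 2 * V * (d * n ^ 2) := by
    have h1 := mul_le_mul_of_nonneg_left e3 (le_of_lt hV0)
    have h2 : (0 : ℝ) < V * n ^ 2 := mul_pos hV0 (pow_pos hn0 2)
    have h3 : (0 : ℝ) < V * n := mul_pos hV0 hn0
    nlinarith [e4, h1, h2, h3]
  have hdn2 : (0 : ℝ) < (d : ℝ) * n ^ 2 := mul_pos hd0 (pow_pos hn0 2)
  have e6 : (q : ℝ) < 2 * V := by
    have h5 : (q : ℝ) * ((d : ℝ) * n ^ 2) < (2 * V) * ((d : ℝ) * n ^ 2) := by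
      nlinarith [e5]
    exact lt_of_mul_lt_mul_right h5 (le_of_lt hdn2)
  rw [gt_iff_lt, div_lt_iff₀ (by norm_num : (0:ℝ) < 2)]
  linarith [e6]
end

section
/- Let A, Θ ⊆ 𝔽_q with |A|²·|Θ| > q². Then there exists θ ∈ Θ such that |A + θA| > q/2, where A + θA = {a + θb : a, b ∈ A}. -/
/-!
For `θ : F` let `E θ` count the pairs in `(A × A)²` that collide under `(a, b) ↦ a + θ b`.
Cauchy–Schwarz over the fibres gives `|A|⁴ ≤ |A + θA| · E θ ≤ q · E θ`, and two distinct pairs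
collide for at most one `θ`, so `∑ θ, E θ ≤ q |A|² + |A|⁴`. If `q · E θ ≥ 2 |A|⁴` held for every
`θ ∈ Θ`, summing these lower bounds against the upper bound would give `|A|² |Θ| ≤ q²`. Hence some
`θ ∈ Θ` has `q · E θ < 2 |A|⁴ ≤ 2 |A + θA| · E θ`.
-/

open Finset

section Collisions

variable {α β : Type*} [DecidableEq β]

lemma sum_sq_card_fiber_eq_card_collisions (s : Finset α) (f : α → β) :
    ∑ c ∈ s.image f, #{x ∈ s | f x = c} ^ 2 = #{p ∈ s ×ˢ s | f p.1 = f p.2} := by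
  rw [card_eq_sum_card_fiberwise (f := fun p => f p.1) (t := s.image f)
    fun p hp => mem_image_of_mem f (mem_product.1 (mem_filter.1 hp).1).1]
  refine sum_congr rfl fun c _ => ?_
  rw [sq, ← card_product]
  congr 1
  ext ⟨x, y⟩
  simp only [mem_product, mem_filter]
  grind

lemma sq_card_le_card_image_mul_card_collisions (s : Finset α) (f : α → β) :
    #s ^ 2 ≤ #(s.image f) * #{p ∈ s ×ˢ s | f p.1 = f p.2} := by
  rw [← sum_sq_card_fiber_eq_card_collisions, card_eq_sum_card_image f s]
  exact sq_sum_le_card_mul_sum_sq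

lemma sum_card_collisions_le {ι : Type*} [Fintype ι] (s : Finset α) (f : ι → α → β)
    (hf : ∀ x y, x ≠ y → #{i | f i x = f i y} ≤ 1) :
    ∑ i, #{p ∈ s ×ˢ s | f i p.1 = f i p.2} ≤ Fintype.card ι * #s + #s ^ 2 := by
  classical
  calc ∑ i, #{p ∈ s ×ˢ s | f i p.1 = f i p.2}
      = ∑ p ∈ s ×ˢ s, #{i | f i p.1 = f i p.2} := by
        simp only [card_filter]
        exact sum_comm
    _ = ∑ x ∈ s, #{i | f i x = f i x} + ∑ p ∈ s.offDiag, #{i | f i p.1 = f i p.2} := by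
        rw [← diag_union_offDiag, sum_union (disjoint_diag_offDiag s), sum_diag]
    _ ≤ ∑ _x ∈ s, Fintype.card ι + ∑ _p ∈ s.offDiag, 1 := by
        gcongr with x _ p hp
        · exact card_le_univ _
        · exact hf _ _ (mem_offDiag.1 hp).2.2
    _ ≤ Fintype.card ι * #s + #s ^ 2 := by
        simp only [sum_const, smul_eq_mul, offDiag_card]
        have : #s * #s - #s ≤ #s ^ 2 := (Nat.sub_le _ _).trans (sq _).ge
        lia

end Collisions

lemma card_filter_add_mul_eq_le_one {R : Type*} [CommRing R] [IsDomain R] [Fintype R]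
    [DecidableEq R] {p p' : R × R} (h : p ≠ p') :
    #{t | p.1 + t * p.2 = p'.1 + t * p'.2} ≤ 1 := by
  refine card_le_one.2 fun t ht t' ht' => ?_
  simp only [mem_filter, mem_univ, true_and] at ht ht'
  have hne : p.2 - p'.2 ≠ 0 := by
    refine sub_ne_zero.2 fun h2 => h (Prod.ext ?_ h2)
    rw [h2] at ht
    exact add_right_cancel ht
  exact mul_right_cancel₀ hne (by linear_combination ht - ht')

lemma exists_mem_mul_lt_two_mul_sq_of_sum_le {ι : Type*} [Fintype ι] (Θ : Finset ι)
    (E : ι → ℕ) (N : ℕ)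
    (hE : ∀ i, N ^ 2 ≤ Fintype.card ι * E i)
    (hsum : ∑ i, E i ≤ Fintype.card ι * N + N ^ 2)
    (hΘ : Fintype.card ι ^ 2 < N * #Θ) :
    ∃ i ∈ Θ, Fintype.card ι * E i < 2 * N ^ 2 := by
  classical
  by_contra! hbig
  set q := Fintype.card ι
  have hlower : q * N ^ 2 + #Θ * N ^ 2 ≤ q * (q * N + N ^ 2) :=
    calc q * N ^ 2 + #Θ * N ^ 2 = ∑ i, (N ^ 2 + if i ∈ Θ then N ^ 2 else 0) := by
          rw [sum_add_distrib, sum_ite_mem, univ_inter]; simp [q]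
      _ ≤ ∑ i, q * E i := by
          gcongr with i
          split_ifs with hi
          · linarith [hbig i hi]
          · simpa using hE i
      _ ≤ q * (q * N + N ^ 2) := by rw [← mul_sum]; gcongr
  have hN : 0 < N := Nat.pos_of_ne_zero fun h0 => by simp [h0] at hΘ
  have : N * #Θ ≤ q ^ 2 := by
    refine le_of_mul_le_mul_right ?_ hN
    nlinarith
  lia

theorem pinned_linear_combination
    {F : Type*} [Field F] [Fintype F] [DecidableEq F] (q : ℕ) (hq : Fintype.card F = q)
    (A Θ : Finset F) (h : A.card ^ 2 * Θ.card > q ^ 2) :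
    ∃ θ ∈ Θ, (((A ×ˢ A).image (fun p : F × F => p.1 + θ * p.2)).card : ℝ)
      > (q : ℝ) / 2 := by
  subst hq
  let f : F → F × F → F := fun θ p => p.1 + θ * p.2
  have hE θ := sq_card_le_card_image_mul_card_collisions (A ×ˢ A) (f θ)
  have hsum := sum_card_collisions_le (A ×ˢ A) f fun _ _ => card_filter_add_mul_eq_le_one
  obtain ⟨θ, hθ, hlt⟩ := exists_mem_mul_lt_two_mul_sq_of_sum_le Θ _ _
    (fun θ => (hE θ).trans (Nat.mul_le_mul_right _ (card_le_univ _))) hsum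
    (by rwa [card_product, ← sq])
  refine ⟨θ, hθ, ?_⟩
  have hdouble : Fintype.card F < 2 * #((A ×ˢ A).image (f θ)) := by
    refine Nat.lt_of_mul_lt_mul_right (hlt.trans_le ?_)
    rw [mul_assoc]
    exact Nat.mul_le_mul_left 2 (hE θ)
  have : (Fintype.card F : ℝ) < 2 * #((A ×ˢ A).image (f θ)) := by exact_mod_cast hdouble
  linarith
end

section
/- Let A ⊆ 𝔽_q with |A| > q^{2/3}. Then there exists a ∈ A such that |aA + A| > q/2, where aA + A = {ab + c : b, c ∈ A}. -/
open Finset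

private lemma pair_sum {F : Type*} [DecidableEq F] (A : Finset F) (x y : ℝ) :
    ∑ b ∈ A, ∑ b' ∈ A, (if b = b' then x else y)
      = A.card * x + ((A.card : ℝ)^2 - A.card) * y := by
  have h1 : ∀ b ∈ A, ∑ b' ∈ A, (if b = b' then x else y) = (A.card : ℝ) * y + (x - y) := by
    intro b hb
    have h2 : ∀ b' : F, (if b = b' then x else y) = y + (if b = b' then x - y else 0) := by
      intro b'; split <;> ring
    simp_rw [h2, Finset.sum_add_distrib, Finset.sum_const, Finset.sum_ite_eq, hb,
      nsmul_eq_mul, if_true]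
  rw [Finset.sum_congr rfl h1, Finset.sum_const, nsmul_eq_mul]
  ring

private lemma ite_count {F : Type*} [Field F] [Fintype F] [DecidableEq F] (b c b' c' : F) :
    ∑ a ∈ (univ : Finset F).erase 0, (if a * b + c = a * b' + c' then (1:ℝ) else 0)
      = if b = b' then (if c = c' then ((Fintype.card F : ℝ) - 1) else 0)
        else (if c = c' then 0 else 1) := by
  by_cases hb : b = b'
  · subst hb
    by_cases hc : c = c'
    · subst hc
      simp only [if_true, Finset.sum_const, nsmul_eq_mul, mul_one,
        Finset.card_erase_of_mem (Finset.mem_univ _), Finset.card_univ, if_pos rfl]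
      rw [Nat.cast_sub Fintype.card_pos, Nat.cast_one]
    · have hne : ∀ a : F, ¬(a * b + c = a * b + c') := by
        intro a hcontra; exact hc (add_left_cancel hcontra)
      simp [hc, hne]
  · have hbb : b - b' ≠ 0 := sub_ne_zero.2 hb
    have key : ∀ a : F, (a * b + c = a * b' + c') ↔ a = (c' - c) / (b - b') := by
      intro a
      rw [eq_div_iff hbb]
      constructor <;> intro hh <;> linear_combination hh
    simp_rw [key]
    rw [Finset.sum_ite_eq' ((univ : Finset F).erase 0)]
    rw [if_neg hb]
    by_cases hc : c = c'
    · subst hc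
      simp
    · rw [if_neg hc, if_pos]
      rw [Finset.mem_erase]
      exact ⟨div_ne_zero (sub_ne_zero.2 (Ne.symm hc)) hbb, Finset.mem_univ _⟩

private lemma sq_expand {F : Type*} [Field F] [Fintype F] [DecidableEq F]
    (A : Finset F) (a : F) :
    ∑ x : F, ((((A ×ˢ A).filter (fun p => a * p.1 + p.2 = x)).card : ℝ))^2
      = ∑ p ∈ A ×ˢ A, ∑ p' ∈ A ×ˢ A,
          (if a * p.1 + p.2 = a * p'.1 + p'.2 then (1:ℝ) else 0) := by
  have hr : ∀ x : F, (((A ×ˢ A).filter (fun p => a * p.1 + p.2 = x)).card : ℝ)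
      = ∑ p ∈ A ×ˢ A, (if a * p.1 + p.2 = x then (1:ℝ) else 0) := by
    intro x; rw [Finset.card_filter]; push_cast; rfl
  have inner : ∀ u v : F,
      ∑ x : F, (if u = x then (1:ℝ) else 0) * (if v = x then 1 else 0)
        = if u = v then 1 else 0 := by
    intro u v
    simp_rw [ite_mul, one_mul, zero_mul]
    rw [Finset.sum_ite_eq]
    simp [eq_comm]
  simp_rw [hr, sq, Finset.sum_mul_sum]
  rw [Finset.sum_comm]
  refine Finset.sum_congr rfl fun p _ => ?_
  rw [Finset.sum_comm]
  refine Finset.sum_congr rfl fun p' _ => ?_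
  exact inner _ _

private lemma key_identity {F : Type*} [Field F] [Fintype F] [DecidableEq F] (A : Finset F) :
    ∑ a ∈ (univ : Finset F).erase 0, ∑ x : F,
        ((((A ×ˢ A).filter (fun p => a * p.1 + p.2 = x)).card : ℝ))^2
      = ((Fintype.card F : ℝ) - 1) * (A.card : ℝ)^2 + ((A.card : ℝ)^2 - A.card)^2 := by
  simp_rw [sq_expand]
  rw [Finset.sum_comm]
  rw [Finset.sum_congr rfl (fun (p : F × F) (_ : p ∈ A ×ˢ A) =>
    (Finset.sum_comm :
      ∑ a ∈ (univ : Finset F).erase 0, ∑ p' ∈ A ×ˢ A,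
        (if a * p.1 + p.2 = a * p'.1 + p'.2 then (1:ℝ) else 0)
      = ∑ p' ∈ A ×ˢ A, ∑ a ∈ (univ : Finset F).erase 0,
        (if a * p.1 + p.2 = a * p'.1 + p'.2 then (1:ℝ) else 0)))]
  simp_rw [ite_count]
  rw [Finset.sum_product]
  simp_rw [Finset.sum_product]
  rw [Finset.sum_congr rfl (fun (b : F) (_ : b ∈ A) => Finset.sum_comm)]
  have hinner : ∀ b b' : F,
      (∑ c ∈ A, ∑ c' ∈ A, if b = b' then (if c = c' then ((Fintype.card F : ℝ) - 1) else 0)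
        else (if c = c' then 0 else 1))
      = if b = b' then (A.card : ℝ) * ((Fintype.card F : ℝ) - 1)
        else ((A.card : ℝ)^2 - A.card) := by
    intro b b'
    by_cases hbb : b = b'
    · simp only [hbb, if_true]
      rw [pair_sum]; ring
    · simp only [hbb, if_false]
      rw [pair_sum]; ring
  calc ∑ b ∈ A, ∑ b' ∈ A, ∑ c ∈ A, ∑ c' ∈ A,
        (if b = b' then (if c = c' then ((Fintype.card F : ℝ) - 1) else 0)
          else (if c = c' then 0 else 1))
      = ∑ b ∈ A, ∑ b' ∈ A, (if b = b' then (A.card : ℝ) * ((Fintype.card F : ℝ) - 1)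
          else ((A.card : ℝ)^2 - A.card)) := by
        refine Finset.sum_congr rfl fun b _ => Finset.sum_congr rfl fun b' _ => hinner b b'
    _ = ((Fintype.card F : ℝ) - 1) * (A.card : ℝ)^2 + ((A.card : ℝ)^2 - A.card)^2 := by
        rw [pair_sum]; ring

theorem pinned_aA_plus_A
    {F : Type*} [Field F] [Fintype F] [DecidableEq F] (q : ℕ) (hq : Fintype.card F = q)
    (A : Finset F) (h : (A.card : ℝ) > (q : ℝ) ^ ((2 : ℝ) / 3)) :
    ∃ a ∈ A, (((A ×ˢ A).image (fun p : F × F => a * p.1 + p.2)).card : ℝ)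
      > (q : ℝ) / 2 := by
  by_contra hcon
  push_neg at hcon
  set m : ℕ := A.card with hm
  have hq1 : 1 ≤ q := hq ▸ Fintype.card_pos
  have hq0 : (0:ℝ) < q := by exact_mod_cast hq1
  have hm0 : (0:ℝ) < m :=
    lt_of_le_of_lt (Real.rpow_nonneg (Nat.cast_nonneg q) _) h
  have hm1 : 1 ≤ m := Nat.cast_pos.mp hm0
  have hm3 : (q:ℝ)^2 < (m:ℝ)^3 := by
    have hc : ((q:ℝ) ^ ((2:ℝ)/3))^(3:ℕ) = (q:ℝ)^2 := by
      rw [← Real.rpow_natCast ((q:ℝ) ^ ((2:ℝ)/3)) 3, ← Real.rpow_mul (Nat.cast_nonneg q)]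
      rw [show ((2:ℝ)/3*(3:ℕ)) = ((2:ℕ):ℝ) by norm_num, Real.rpow_natCast]
    calc (q:ℝ)^2 = ((q:ℝ)^((2:ℝ)/3))^(3:ℕ) := hc.symm
      _ < (m:ℝ)^3 := by
        exact pow_lt_pow_left₀ h (Real.rpow_nonneg (Nat.cast_nonneg q) _) (by norm_num)
  have hmq : (m:ℝ) ≤ q := by exact_mod_cast hq ▸ Finset.card_le_univ A
  -- notation
  set r : F → F → ℕ := fun a x => ((A ×ˢ A).filter (fun p => a * p.1 + p.2 = x)).card with hr
  set S : F → ℝ := fun a => ∑ x : F, ((r a x : ℝ))^2 with hS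
  set D : ℝ := (m:ℝ)^4 / q with hDdef
  have hD : (q:ℝ) * D = (m:ℝ)^4 := by
    rw [hDdef]; field_simp
  have hD0 : 0 ≤ D := by positivity
  -- sum of r over univ
  have hsum_univ : ∀ a : F, ∑ x : F, (r a x : ℝ) = (m:ℝ)^2 := by
    intro a
    have hN : ∑ x : F, r a x = m^2 := by
      rw [hr]
      have := (Finset.card_eq_sum_card_fiberwise
        (f := fun p : F × F => a * p.1 + p.2) (s := A ×ˢ A) (t := univ)
        (fun x _ => Finset.mem_univ _))
      rw [← this, Finset.card_product, sq]
    exact_mod_cast congrArg (Nat.cast : ℕ → ℝ) hN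
  -- variance nonnegativity: D ≤ S a ... more precisely 0 ≤ S a - D
  have hvar : ∀ a : F, ∑ x : F, ((r a x : ℝ) - (m:ℝ)^2/q)^2 = S a - D := by
    intro a
    have expand : ∀ x : F, ((r a x : ℝ) - (m:ℝ)^2/q)^2
        = (r a x:ℝ)^2 - 2*((m:ℝ)^2/q)*(r a x) + ((m:ℝ)^2/q)^2 := fun x => by ring
    simp_rw [expand]
    rw [Finset.sum_add_distrib, Finset.sum_sub_distrib, ← Finset.mul_sum, hsum_univ a,
      Finset.sum_const, Finset.card_univ, hq, nsmul_eq_mul, hS, hDdef]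
    field_simp
    ring
  have hnn : ∀ a : F, 0 ≤ S a - D := by
    intro a
    rw [← hvar a]
    exact Finset.sum_nonneg fun x _ => sq_nonneg _
  -- Cauchy-Schwarz per a in A
  have hCS : ∀ a ∈ A, 2 * D ≤ S a := by
    intro a ha
    have hS0 : 0 ≤ S a := Finset.sum_nonneg fun x _ => sq_nonneg _
    set img := (A ×ˢ A).image (fun p : F × F => a * p.1 + p.2) with himg
    have c2 : ∑ x ∈ img, (r a x : ℝ) = (m:ℝ)^2 := by
      have hN : ∑ x ∈ img, r a x = m^2 := by
        rw [hr, himg]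
        rw [← Finset.card_eq_sum_card_image (fun p : F × F => a * p.1 + p.2) (A ×ˢ A),
          Finset.card_product, sq]
      exact_mod_cast congrArg (Nat.cast : ℕ → ℝ) hN
    have c1 : ((m:ℝ)^2)^2 ≤ (img.card : ℝ) * ∑ x ∈ img, (r a x : ℝ)^2 := by
      have := Finset.sum_mul_sq_le_sq_mul_sq img (fun _ => (1:ℝ)) (fun x => (r a x : ℝ))
      simpa [c2] using this
    have c3 : ∑ x ∈ img, (r a x : ℝ)^2 ≤ S a := by
      apply Finset.sum_le_sum_of_subset_of_nonneg (Finset.subset_univ img)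
      intro x _ _; exact sq_nonneg _
    have c4 : ((m:ℝ)^2)^2 ≤ (img.card : ℝ) * S a :=
      le_trans c1 (mul_le_mul_of_nonneg_left c3 (Nat.cast_nonneg _))
    have c5 : (img.card : ℝ) * S a ≤ ((q:ℝ)/2) * S a :=
      mul_le_mul_of_nonneg_right (hcon a ha) hS0
    have c6 : (m:ℝ)^4 ≤ ((q:ℝ)/2) * S a := by
      calc (m:ℝ)^4 = ((m:ℝ)^2)^2 := by ring
        _ ≤ _ := le_trans c4 c5
    -- 2*D ≤ S a
    have : (q:ℝ) * (2 * D) ≤ q * S a := by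
      calc (q:ℝ) * (2*D) = 2 * ((q:ℝ)*D) := by ring
        _ = 2 * (m:ℝ)^4 := by rw [hD]
        _ ≤ 2 * (((q:ℝ)/2) * S a) := by linarith
        _ = q * S a := by ring
    exact le_of_mul_le_mul_left this hq0
  -- lower bound for the sum over A.erase 0
  have hlow : ((m:ℝ) - 1) * D ≤ ∑ a ∈ A.erase 0, (S a - D) := by
    have h1 : (A.erase 0).card • D ≤ ∑ a ∈ A.erase 0, (S a - D) := by
      apply Finset.card_nsmul_le_sum
      intro a ha
      have := hCS a (Finset.mem_of_mem_erase ha)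
      linarith
    have h2 : ((m:ℝ) - 1) ≤ ((A.erase 0).card : ℝ) := by
      have := Finset.pred_card_le_card_erase (s := A) (a := 0)
      have hcast : ((m - 1 : ℕ) : ℝ) ≤ ((A.erase 0).card : ℝ) := by exact_mod_cast this
      rwa [Nat.cast_sub hm1, Nat.cast_one] at hcast
    calc ((m:ℝ) - 1) * D ≤ ((A.erase 0).card : ℝ) * D :=
        mul_le_mul_of_nonneg_right h2 hD0
      _ = (A.erase 0).card • D := by rw [nsmul_eq_mul]
      _ ≤ _ := h1
  -- upper bound via key identity
  have hup : ∑ a ∈ A.erase 0, (S a - D) ≤ ∑ a ∈ (univ : Finset F).erase 0, (S a - D) := by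
    apply Finset.sum_le_sum_of_subset_of_nonneg
    · exact Finset.erase_subset_erase 0 (Finset.subset_univ A)
    · intro a _ _; exact hnn a
  have hid : ∑ a ∈ (univ : Finset F).erase 0, (S a - D)
      = ((q:ℝ) - 1) * (m:ℝ)^2 + ((m:ℝ)^2 - m)^2 - ((q:ℝ) - 1) * D := by
    rw [Finset.sum_sub_distrib]
    have hK := key_identity A
    rw [hq] at hK
    rw [hS]
    rw [hK, Finset.sum_const, Finset.card_erase_of_mem (Finset.mem_univ _),
      Finset.card_univ, hq, nsmul_eq_mul, Nat.cast_sub hq1, Nat.cast_one, hm]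
  have hchain : ((m:ℝ) - 1) * D + ((q:ℝ) - 1) * D
      ≤ ((q:ℝ) - 1) * (m:ℝ)^2 + ((m:ℝ)^2 - m)^2 := by
    have := le_trans hlow (le_trans hup (le_of_eq hid))
    linarith
  have hbig : ((m:ℝ) + q - 2) * (m:ℝ)^4
      ≤ (q:ℝ) * (((q:ℝ) - 1) * (m:ℝ)^2 + ((m:ℝ)^2 - m)^2) := by
    have h2 : ((m:ℝ) + q - 2) * (m:ℝ)^4
        = (q:ℝ) * (((m:ℝ) - 1) * D + ((q:ℝ) - 1) * D) := by
      have h3 : (q:ℝ) * (((m:ℝ) - 1) * D + ((q:ℝ) - 1) * D)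
          = ((m:ℝ) + q - 2) * ((q:ℝ) * D) := by ring
      rw [h3, hD]
    rw [h2]
    exact mul_le_mul_of_nonneg_left hchain hq0.le
  have e1 : (q:ℝ)^2 * (m:ℝ)^2 < (m:ℝ)^3 * (m:ℝ)^2 :=
    mul_lt_mul_of_pos_right hm3 (pow_pos hm0 2)
  have e2 : (0:ℝ) ≤ ((q:ℝ) - m) * (m:ℝ)^3 :=
    mul_nonneg (by linarith) (pow_nonneg hm0.le 3)
  nlinarith [hbig, e1, e2]
end

section
/- Let A ⊆ 𝔽_q with 0 ∉ A and |A| > q^{2/3}. Then there exists a ∈ A such that |A(a + A)| > q/2, where A(a+A) = {b(a+c) : b, c ∈ A}. -/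
open Finset
open scoped Pointwise Combinatorics.Additive

/-! For each `a`, Cauchy–Schwarz gives `|A|⁴ = |A|² |a + A|² ≤ |A(a + A)| · E(a)`, where `E(a)` is
the multiplicative energy of `A` and `a + A`. Summing over all `a ∈ 𝔽_q`: a quadruple
`(b, b', c, c') ∈ A⁴` satisfies `b(a + c) = b'(a + c')` for all `q` values of `a` if
`(b, c) = (b', c')`, for none if `b = b'` but `c ≠ c'` (as `b ≠ 0`), and for exactly one
if `b ≠ b'`. Hence `∑ₐ E(a) = |A|² (q + |A|(|A| - 1))`. If `|A(a + A)| ≤ q/2` for every `a ∈ A`,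
then together with `|A(a + A)| ≤ q` for the other `a` this yields
`(q + |A|) |A|⁴ ≤ q |A|² (q + |A|(|A| - 1))`, i.e. `|A|³ + q|A| ≤ q²`, contradicting `|A|³ > q²`. -/

namespace Finset

variable {α : Type*} [DecidableEq α]

lemma image_mul_add_product [Mul α] [Add α] (s t : Finset α) (a : α) :
    (s ×ˢ t).image (fun p => p.1 * (a + p.2)) = s * (a +ᵥ t) := by
  ext
  simp [mem_mul, mem_vadd_finset, and_assoc]

lemma mulEnergy_vadd_finset_right [Mul α] [Add α] [IsLeftCancelAdd α] (s t : Finset α) (a : α) :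
    Eₘ[s, a +ᵥ t] = #{x ∈ (s ×ˢ s) ×ˢ t ×ˢ t | x.1.1 * (a + x.2.1) = x.1.2 * (a + x.2.2)} := by
  rw [mulEnergy, vadd_finset_def]
  symm
  refine card_nbij (fun x => (x.1, a + x.2.1, a + x.2.2)) ?_ ?_ ?_
  · intro x hx
    simp_all
  · intro x _ y _ h
    simp_all [Prod.ext_iff]
  · rintro ⟨⟨b, b'⟩, t₁, t₂⟩ hx
    simp only [coe_filter, mem_product, mem_image, Set.mem_ofPred_eq] at hx
    obtain ⟨⟨⟨hb, hb'⟩, ⟨c, hc, rfl⟩, ⟨c', hc', rfl⟩⟩, h⟩ := hx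
    exact ⟨((b, b'), c, c'), by simp_all, rfl⟩

lemma card_pow_four_le_card_mul_mulEnergy_vadd [Mul α] [AddGroup α] (s : Finset α) (a : α) :
    #s ^ 4 ≤ #(s * (a +ᵥ s)) * Eₘ[s, a +ᵥ s] := by
  simpa [card_vadd_finset, ← pow_add] using le_card_mul_mul_mulEnergy s (a +ᵥ s)

end Finset

section FiniteField

variable {F : Type*} [Field F] [Fintype F] [DecidableEq F]

lemma card_filter_mul_eq (u v : F) :
    #{x | u * x = v} = if u = 0 then (if v = 0 then Fintype.card F else 0) else 1 := by
  split_ifs with hu hv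
  · simp [hu, hv]
  · simp [hu, Ne.symm hv]
  · rw [card_eq_one]
    exact ⟨v / u, by ext x; simp [eq_div_iff hu, mul_comm]⟩

lemma card_filter_mul_add_eq_mul_add {b : F} (hb : b ≠ 0) (b' c c' : F) :
    #{a | b * (a + c) = b' * (a + c')} =
      if b = b' then (if c = c' then Fintype.card F else 0) else 1 := by
  have linear : ∀ a, b * (a + c) = b' * (a + c') ↔ (b - b') * a = b' * c' - b * c := fun a => by
    constructor <;> intro h <;> linear_combination h
  simp_rw [linear, card_filter_mul_eq, sub_eq_zero]
  by_cases hbb : b = b'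
  · subst hbb
    simp [hb, eq_comm]
  · simp [hbb]

theorem sum_mulEnergy_vadd_finset {A : Finset F} (h0 : (0 : F) ∉ A) :
    ∑ a : F, Eₘ[A, a +ᵥ A] = #A ^ 2 * (Fintype.card F + #A * (#A - 1)) := by
  simp_rw [mulEnergy_vadd_finset_right, card_filter]
  rw [sum_comm, sum_product]
  simp_rw [← card_filter]
  have hrow : ∀ p ∈ A ×ˢ A, ∑ r ∈ A ×ˢ A, #{a | p.1 * (a + r.1) = p.2 * (a + r.2)} =
      if p.1 = p.2 then #A * Fintype.card F else #A ^ 2 := by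
    rintro ⟨b, b'⟩ hp
    have hb : b ≠ 0 := by rintro rfl; exact h0 (mem_product.1 hp).1
    simp only [card_filter_mul_add_eq_mul_add hb]
    split_ifs
    · rw [← sum_filter, ← diag_eq_filter, sum_const, diag_card, smul_eq_mul]
    · simp [sq]
  have hoff : {p ∈ A ×ˢ A | ¬p.1 = p.2} = A.offDiag := by
    ext
    simp [and_assoc]
  rw [sum_congr rfl hrow, sum_ite, ← diag_eq_filter, hoff]
  simp only [sum_const, smul_eq_mul, diag_card, offDiag_card, ← Nat.mul_sub_one]
  ring

end FiniteField

lemma mul_sq_mul_add_lt_of_sq_lt_cube {q n : ℕ} (h : q ^ 2 < n ^ 3) :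
    q * (n ^ 2 * (q + n * (n - 1))) < (q + n) * n ^ 4 := by
  have hn : n ≠ 0 := by rintro rfl; simp at h
  obtain ⟨m, rfl⟩ := Nat.exists_eq_add_one_of_ne_zero hn
  simp only [Nat.add_sub_cancel]
  nlinarith

lemma sq_lt_cube_of_rpow_lt {x y : ℝ} (hx : 0 ≤ x) (h : x ^ ((2 : ℝ) / 3) < y) :
    x ^ 2 < y ^ 3 := by
  calc x ^ 2 = (x ^ ((2 : ℝ) / 3)) ^ 3 := by
        rw [← Real.rpow_mul_natCast hx]; norm_num
    _ < y ^ 3 := by gcongr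

theorem pinned_A_times_a_plus_A
    {F : Type*} [Field F] [Fintype F] [DecidableEq F] (q : ℕ) (hq : Fintype.card F = q)
    (A : Finset F) (h0 : (0 : F) ∉ A) (h : (A.card : ℝ) > (q : ℝ) ^ ((2 : ℝ) / 3)) :
    ∃ a ∈ A, (((A ×ˢ A).image (fun p : F × F => p.1 * (a + p.2))).card : ℝ)
      > (q : ℝ) / 2 := by
  subst hq
  by_contra! hsmall
  have hcube : Fintype.card F ^ 2 < #A ^ 3 := by
    exact_mod_cast sq_lt_cube_of_rpow_lt (Nat.cast_nonneg _) h
  have hbound : ∀ a : F, #A ^ 4 + (if a ∈ A then #A ^ 4 else 0) ≤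
      Fintype.card F * Eₘ[A, a +ᵥ A] := by
    intro a
    have hCS := card_pow_four_le_card_mul_mulEnergy_vadd A a
    split_ifs with ha
    · have hhalf : 2 * #(A * (a +ᵥ A)) ≤ Fintype.card F := by
        have := hsmall a ha
        rw [image_mul_add_product] at this
        exact_mod_cast (by linarith : (2 * #(A * (a +ᵥ A)) : ℝ) ≤ Fintype.card F)
      calc #A ^ 4 + #A ^ 4 = 2 * #A ^ 4 := by ring
        _ ≤ 2 * (#(A * (a +ᵥ A)) * Eₘ[A, a +ᵥ A]) := by gcongr
        _ ≤ Fintype.card F * Eₘ[A, a +ᵥ A] := by rw [← mul_assoc]; gcongr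
    · simpa using hCS.trans (Nat.mul_le_mul_right _ (card_le_univ _))
  have hsum := sum_le_sum fun a (_ : a ∈ univ) => hbound a
  rw [← mul_sum, sum_mulEnergy_vadd_finset h0, sum_add_distrib, sum_ite_mem, univ_inter,
    sum_const, sum_const, card_univ, smul_eq_mul, smul_eq_mul, ← add_mul] at hsum
  exact (mul_sq_mul_add_lt_of_sq_lt_cube hcube).not_ge hsum
end

section
/- Let q be an odd prime power, E ⊆ 𝔽_q², and ℓ a line in 𝔽_q². If |E|·|ℓ ∩ E| > 2q², then there exists e ∈ E ∩ ℓ such that the pinned distance set Δ_e(E) = {‖v − e‖ : v ∈ E} has cardinality > q/2. -/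
/-!
Parametrise `ℓ` as `p + σ • w`. Then `‖v - (p + σ • w)‖ = B v - 2σ A v + σ² ‖w‖` with
`A v = w ⬝ (v - p)` and `B v = ‖v - p‖`, so the pinned distance sets from the points of
`ℓ ∩ E` are translates of the value sets of the pencil `B - μ A`, one slope `μ = 2σ` per point.
By Cauchy–Schwarz, a pencil member with at most `q / 2` values has at least `2|E|² / q`
collisions; two points collide for at most one slope unless they have the same `(A, B)`, so
summing over all `q` slopes gives `|ℓ ∩ E| |E|² ≤ q² · #{collisions of (A, B)}`. A line
`A = const` meets a circle about `p` in at most two points, so `(A, B)` is at most two-to-one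
when `‖w‖ ≠ 0`; for an isotropic line it is injective off `ℓ`, and `|ℓ ∩ E|² ≤ q²` covers
the rest.
-/

open Finset
open scoped Classical

section Collisions

variable {α β : Type*} [DecidableEq β]

def collisionCount (f : α → β) (s : Finset α) : ℕ :=
  #{z ∈ s ×ˢ s | f z.1 = f z.2}

lemma collisionCount_eq_sum (f : α → β) (s : Finset α) :
    collisionCount f s = ∑ x ∈ s, #{y ∈ s | f y = f x} := by
  simp only [collisionCount, card_filter, sum_product, eq_comm]

lemma collisionCount_eq_sum_sq (f : α → β) (s : Finset α) :
    collisionCount f s = ∑ b ∈ s.image f, #{x ∈ s | f x = b} ^ 2 := by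
  rw [collisionCount_eq_sum,
    ← sum_fiberwise_of_maps_to' (fun x hx => mem_image_of_mem f hx)
      (fun b => #{x ∈ s | f x = b})]
  simp [sq]

lemma sq_card_le_card_image_mul_collisionCount (f : α → β) (s : Finset α) :
    #s ^ 2 ≤ #(s.image f) * collisionCount f s := by
  rw [collisionCount_eq_sum_sq, card_eq_sum_card_image f s]
  exact sq_sum_le_card_mul_sum_sq

lemma collisionCount_le_mul_card {f : α → β} {s : Finset α} {k : ℕ}
    (hk : ∀ x ∈ s, #{y ∈ s | f y = f x} ≤ k) : collisionCount f s ≤ k * #s := by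
  rw [collisionCount_eq_sum, mul_comm, ← smul_eq_mul]
  exact sum_le_card_nsmul _ _ _ hk

end Collisions

section Slopes

variable {α F : Type*} [Field F] [Fintype F] [DecidableEq F]

lemma card_filter_sub_mul_eq_le_one {a a' b b' : F} (h : (a, b) ≠ (a', b')) :
    #{μ : F | b - μ * a = b' - μ * a'} ≤ 1 := by
  refine card_le_one.2 fun μ hμ ν hν => ?_
  simp only [mem_filter, mem_univ, true_and] at hμ hν
  have ha : a - a' ≠ 0 := by
    refine sub_ne_zero.2 fun ha => h ?_
    rw [ha] at hμ ⊢
    rw [sub_left_inj.1 hμ]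
  exact mul_right_cancel₀ ha (by linear_combination hν - hμ)

lemma sum_collisionCount_sub_mul_le (A B : α → F) (s : Finset α) :
    ∑ μ : F, collisionCount (fun v => B v - μ * A v) s
      ≤ #s ^ 2 + Fintype.card F * collisionCount (fun v => (A v, B v)) s := by
  have hpair : ∀ z : α × α, #{μ : F | B z.1 - μ * A z.1 = B z.2 - μ * A z.2}
      ≤ 1 + Fintype.card F * if (A z.1, B z.1) = (A z.2, B z.2) then 1 else 0 := by
    intro z
    split_ifs with h
    · exact (card_le_univ _).trans (by omega)
    · simpa using card_filter_sub_mul_eq_le_one h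
  calc ∑ μ : F, collisionCount (fun v => B v - μ * A v) s
      = ∑ z ∈ s ×ˢ s, #{μ : F | B z.1 - μ * A z.1 = B z.2 - μ * A z.2} := by
        simp only [collisionCount, card_filter]
        exact sum_comm
    _ ≤ ∑ z ∈ s ×ˢ s,
          (1 + Fintype.card F * if (A z.1, B z.1) = (A z.2, B z.2) then 1 else 0) :=
        sum_le_sum fun z _ => hpair z
    _ = #s ^ 2 + Fintype.card F * collisionCount (fun v => (A v, B v)) s := by
        rw [sum_add_distrib, ← mul_sum, collisionCount, card_filter]
        simp [sq]

lemma card_mul_sq_le_of_two_mul_card_image_le (A B : α → F) (s : Finset α) (S : Finset F)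
    (hS : ∀ μ ∈ S, 2 * #(s.image fun v => B v - μ * A v) ≤ Fintype.card F) :
    #S * #s ^ 2 ≤ Fintype.card F ^ 2 * collisionCount (fun v => (A v, B v)) s := by
  set q := Fintype.card F
  have hμ : ∀ μ : F, #s ^ 2 + (if μ ∈ S then #s ^ 2 else 0)
      ≤ q * collisionCount (fun v => B v - μ * A v) s := by
    intro μ
    have hCS := sq_card_le_card_image_mul_collisionCount (fun v => B v - μ * A v) s
    split_ifs with h
    · nlinarith [hS μ h]
    · nlinarith [card_le_univ (s.image fun v => B v - μ * A v)]
  have hsum := sum_le_sum fun μ (_ : μ ∈ univ) => hμ μ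
  rw [sum_add_distrib, ← mul_sum, sum_ite_mem, univ_inter] at hsum
  simp only [sum_const, card_univ, smul_eq_mul] at hsum
  nlinarith [sum_collisionCount_sub_mul_le A B s]

end Slopes

section Plane

variable {F : Type*} [Field F]

def dot (u v : F × F) : F := u.1 * v.1 + u.2 * v.2

def cross (u v : F × F) : F := u.1 * v.2 - u.2 * v.1

def perp (w : F × F) : F × F := (-w.2, w.1)

def polarCoords (p w v : F × F) : F × F := (dot w (v - p), dot (v - p) (v - p))

lemma dot_self_sub_eq_sq_add_sq (v e : F × F) :
    dot (v - e) (v - e) = (v.1 - e.1) ^ 2 + (v.2 - e.2) ^ 2 := by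
  simp only [dot, Prod.fst_sub, Prod.snd_sub]
  ring

lemma perp_ne_zero {w : F × F} (hw : w ≠ 0) : perp w ≠ 0 := by
  refine fun h => hw ?_
  simp only [perp, Prod.ext_iff, Prod.fst_zero, Prod.snd_zero, neg_eq_zero] at h ⊢
  exact h.symm

lemma cross_eq_zero_iff {w : F × F} (hw : w ≠ 0) {u : F × F} :
    cross w u = 0 ↔ ∃ t : F, t • w = u := by
  simp only [cross, Prod.ext_iff, Prod.smul_fst, Prod.smul_snd, smul_eq_mul]
  constructor
  · intro h
    by_cases h1 : w.1 = 0
    · have h2 : w.2 ≠ 0 := fun h2 => hw (Prod.ext h1 h2)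
      refine ⟨u.2 / w.2, ?_, by field_simp⟩
      rw [h1, zero_mul, zero_sub, neg_eq_zero] at h
      rw [h1, mul_zero, (mul_eq_zero.1 h).resolve_left h2]
    · refine ⟨u.1 / w.1, by field_simp, ?_⟩
      field_simp
      linear_combination -h
  · rintro ⟨t, h1, h2⟩
    rw [← h1, ← h2]
    ring

lemma exists_add_smul_eq_of_cross_sub_eq_zero {p w e : F × F}
    (hw : w ≠ 0) (he : cross w (e - p) = 0) : ∃ σ : F, p + σ • w = e := by
  simpa only [eq_sub_iff_add_eq'] using (cross_eq_zero_iff hw).1 he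

lemma dot_sub_add_smul (v p w : F × F) (σ : F) :
    dot (v - (p + σ • w)) (v - (p + σ • w))
      = dot (v - p) (v - p) - 2 * σ * dot w (v - p) + σ ^ 2 * dot w w := by
  simp only [dot, Prod.fst_sub, Prod.snd_sub, Prod.fst_add, Prod.snd_add, Prod.smul_fst,
    Prod.smul_snd, smul_eq_mul]
  ring

lemma exists_eq_add_smul_perp_of_polarCoords_eq {p w v v' : F × F} (hw : w ≠ 0)
    (h : polarCoords p w v' = polarCoords p w v) :
    ∃ t : F, v' = v + t • perp w ∧ t * (2 * cross w (v - p) + t * dot w w) = 0 := by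
  simp only [polarCoords, Prod.mk.injEq] at h
  have hperp : cross (perp w) (v' - v) = 0 := by
    simp only [cross, perp, dot, Prod.fst_sub, Prod.snd_sub] at h ⊢
    linear_combination -h.1
  obtain ⟨t, ht⟩ := (cross_eq_zero_iff (perp_ne_zero hw)).1 hperp
  rw [eq_sub_iff_add_eq'] at ht
  refine ⟨t, ht.symm, ?_⟩
  subst ht
  have := h.2
  simp only [cross, perp, dot, Prod.fst_sub, Prod.snd_sub, Prod.fst_add, Prod.snd_add,
    Prod.smul_fst, Prod.smul_snd, smul_eq_mul] at this ⊢
  linear_combination this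

end Plane

section Fibers

variable {F : Type*} [Field F] [DecidableEq F]

lemma card_filter_polarCoords_eq_le_two {p w : F × F} (hw : dot w w ≠ 0) (s : Finset (F × F))
    (v : F × F) : #{v' ∈ s | polarCoords p w v' = polarCoords p w v} ≤ 2 := by
  have hw0 : w ≠ 0 := by rintro rfl; simp [dot] at hw
  set t₀ := -(2 * cross w (v - p)) / dot w w
  have hsub : {v' ∈ s | polarCoords p w v' = polarCoords p w v} ⊆ {v, v + t₀ • perp w} := by
    intro v' hv'
    obtain ⟨t, rfl, ht⟩ := exists_eq_add_smul_perp_of_polarCoords_eq hw0 (mem_filter.1 hv').2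
    rcases mul_eq_zero.1 ht with rfl | ht
    · simp
    · have : t = t₀ := by rw [eq_div_iff hw]; linear_combination ht
      simp [this]
  exact (card_le_card hsub).trans card_le_two

lemma card_filter_polarCoords_eq_le_one {p w v : F × F} (h2 : (2 : F) ≠ 0) (hw : w ≠ 0)
    (hiso : dot w w = 0) (hv : cross w (v - p) ≠ 0) (s : Finset (F × F)) :
    #{v' ∈ s | polarCoords p w v' = polarCoords p w v} ≤ 1 := by
  refine card_le_one_iff_subset_singleton.2 ⟨v, fun v' hv' => ?_⟩
  obtain ⟨t, rfl, ht⟩ := exists_eq_add_smul_perp_of_polarCoords_eq hw (mem_filter.1 hv').2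
  rw [hiso, mul_zero, add_zero] at ht
  rcases mul_eq_zero.1 ht with rfl | ht
  · simp
  · exact absurd ht (mul_ne_zero h2 hv)

end Fibers

section Line

variable {F : Type*} [Field F] [Fintype F] [DecidableEq F]

lemma IsLine.exists_mem_iff_cross_eq_zero {ℓ : Finset (F × F)} (hℓ : IsLine ℓ) :
    ∃ p w : F × F, w ≠ 0 ∧ ∀ v, v ∈ ℓ ↔ cross w (v - p) = 0 := by
  obtain ⟨a, b, c, hab, rfl⟩ := hℓ
  have hp : ∃ p : F × F, a * p.1 + b * p.2 = c := by
    by_cases ha : a = 0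
    · have hb : b ≠ 0 := fun hb => hab (by rw [ha, hb])
      exact ⟨(0, c / b), by field_simp; ring⟩
    · exact ⟨(c / a, 0), by field_simp; ring⟩
  obtain ⟨p, hp⟩ := hp
  refine ⟨p, (b, -a), fun h => hab ?_, fun v => ?_⟩
  · simp only [Prod.ext_iff, Prod.fst_zero, Prod.snd_zero, neg_eq_zero] at h ⊢
    exact h.symm
  · simp only [mem_filter, mem_univ, true_and, cross, Prod.fst_sub, Prod.snd_sub]
    rw [← sub_eq_zero, ← hp]
    constructor <;> intro h <;> linear_combination h

lemma card_le_of_forall_cross_sub_eq_zero {p w : F × F} (hw : w ≠ 0) {L : Finset (F × F)}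
    (hL : ∀ e ∈ L, cross w (e - p) = 0) :
    #L ≤ Fintype.card F := by
  have hsub : L ⊆ univ.image fun σ : F => p + σ • w := fun e he => by
    simpa using exists_add_smul_eq_of_cross_sub_eq_zero hw (hL e he)
  exact (card_le_card hsub).trans (card_image_le.trans_eq card_univ)

lemma card_mul_card_le_of_two_mul_card_pinned_le (h2 : (2 : F) ≠ 0) {p w : F × F} (hw : w ≠ 0)
    {L E s : Finset (F × F)} {k : ℕ}
    (hL : ∀ e ∈ L, cross w (e - p) = 0)
    (hpin : ∀ e ∈ L, 2 * #(E.image fun v => dot (v - e) (v - e)) ≤ Fintype.card F)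
    (hsE : s ⊆ E) (hk : ∀ v ∈ s, #{v' ∈ s | polarCoords p w v' = polarCoords p w v} ≤ k) :
    #L * #s ≤ k * Fintype.card F ^ 2 := by
  choose! σ hσ using fun e he => exists_add_smul_eq_of_cross_sub_eq_zero hw (hL e he)
  set A : F × F → F := fun v => dot w (v - p)
  set B : F × F → F := fun v => dot (v - p) (v - p)
  have hcard : #(L.image fun e => 2 * σ e) = #L :=
    card_image_of_injOn fun e he e' he' h => by
      rw [← hσ e he, ← hσ e' he', mul_left_cancel₀ h2 h]
  have hS : ∀ μ ∈ L.image (fun e => 2 * σ e),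
      2 * #(s.image fun v => B v - μ * A v) ≤ Fintype.card F := by
    simp only [mem_image]
    rintro _ ⟨e, he, rfl⟩
    have hshift : ∀ t : F, (s.image fun v => dot (v - (p + t • w)) (v - (p + t • w)))
        = (s.image fun v => B v - 2 * t * A v).image (· + t ^ 2 * dot w w) := fun t => by
      rw [image_image]
      simp only [Function.comp_def, dot_sub_add_smul, A, B]
    rw [← card_image_of_injective _ (add_left_injective (σ e ^ 2 * dot w w)), ← hshift,
      hσ e he]
    have := card_le_card (image_subset_image (f := fun v => dot (v - e) (v - e)) hsE)
    linarith [hpin e he]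
  have hcore := card_mul_sq_le_of_two_mul_card_image_le A B s _ hS
  have hR : collisionCount (fun v => (A v, B v)) s ≤ k * #s := collisionCount_le_mul_card hk
  rw [hcard] at hcore
  rcases Nat.eq_zero_or_pos #s with hs | hs
  · simp [hs]
  · refine Nat.le_of_mul_le_mul_right ?_ hs
    nlinarith

end Line

lemma two_ne_zero_of_odd_card {F : Type*} [Field F] [Fintype F] (h : Odd (Fintype.card F)) :
    (2 : F) ≠ 0 :=
  Ring.two_ne_zero fun hF => by
    have := FiniteField.even_card_of_char_two hF
    rw [Nat.odd_iff] at h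
    omega

theorem pinned_distances_on_a_line
    {F : Type*} [Field F] [Fintype F] [DecidableEq F] (q : ℕ) (hq : Fintype.card F = q)
    (hodd : Odd q) (E ℓ : Finset (F × F)) (hℓ : IsLine ℓ)
    (h : E.card * (ℓ ∩ E).card > 2 * q ^ 2) :
    ∃ e ∈ E ∩ ℓ,
      ((E.image (fun v : F × F => (v.1 - e.1) ^ 2 + (v.2 - e.2) ^ 2)).card : ℝ)
        > (q : ℝ) / 2 := by
  subst hq
  by_contra! hsmall
  have h2 : (2 : F) ≠ 0 := two_ne_zero_of_odd_card hodd
  obtain ⟨p, w, hw, hmem⟩ := hℓ.exists_mem_iff_cross_eq_zero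
  have hL : ∀ e ∈ ℓ ∩ E, cross w (e - p) = 0 := fun e he => (hmem e).1 (mem_inter.1 he).1
  have hpin : ∀ e ∈ ℓ ∩ E,
      2 * #(E.image fun v => dot (v - e) (v - e)) ≤ Fintype.card F := by
    intro e he
    have hsmall_e := hsmall e (by rwa [inter_comm])
    simp only [← dot_self_sub_eq_sq_add_sq] at hsmall_e
    exact_mod_cast (by linarith :
      (2 * #(E.image fun v => dot (v - e) (v - e)) : ℝ) ≤ Fintype.card F)
  by_cases hiso : dot w w = 0
  · have hoff := card_mul_card_le_of_two_mul_card_pinned_le h2 hw hL hpin sdiff_subset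
      fun v hv => card_filter_polarCoords_eq_le_one h2 hw hiso
        (fun h0 => (mem_sdiff.1 hv).2 ((hmem v).2 h0)) (E \ ℓ)
    have hon := card_le_of_forall_cross_sub_eq_zero hw hL
    have hsplit := card_sdiff_add_card_inter E ℓ
    rw [inter_comm] at hsplit
    nlinarith
  · have := card_mul_card_le_of_two_mul_card_pinned_le h2 hw hL hpin subset_rfl
      fun v _ => card_filter_polarCoords_eq_le_two hiso E v
    linarith
end

section
/- Let q be an odd prime power and E ⊆ 𝔽_q² with |E| > (2q)^{3/2}. Then there exists e ∈ E such that |{‖v − e‖ : v ∈ E}| > q/2. -/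
/-
For `t ≠ 0` all circles `S_t = {x | ‖x‖ = t}` have the same size (multiply by a point of norm
`t / t'`, viewing `F × F` as `F[i]`), and `|S_0| ≤ 2q - 1`, so `|S_t| ≥ q - 1`. Suppose every
`e ∈ E` determines at most `q / 2` distances; then it misses at least `q / 2` radii, all nonzero.

For `q ≤ 16`, the circles about one `e ∈ E` with missed radii avoid `E`, so `2|E| ≤ q² + q`,
which is at most `(2q)^{3/2}` in that range. For `q ≥ 17`, let `ν(u, t)` count the `v ∈ E` with
`‖v - u‖ = t`. Distinct points are equidistant from exactly a line of centres `u`, so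
`∑_{u,t} ν(u, t)² = |E|q² + |E|(|E| - 1)q`, which bounds the deviation of `ν(·, t)` from its mean
`|E||S_t|/q²`, summed over `t ≠ 0`, from above; from below, each `e ∈ E` contributes the squared
means of its missed radii. The two bounds contradict `|E|² > 8q³`.
-/

open Finset

lemma sum_sub_sum_div_card_sq {ι K : Type*} [Field K] [CharZero K] (s : Finset ι) (f : ι → K) :
    ∑ i ∈ s, (f i - (∑ j ∈ s, f j) / #s) ^ 2 = ∑ i ∈ s, f i ^ 2 - (∑ i ∈ s, f i) ^ 2 / #s := by
  rcases s.eq_empty_or_nonempty with rfl | hs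
  · simp
  have hs' : (#s : K) ≠ 0 := by exact_mod_cast hs.card_pos.ne'
  simp only [sub_sq, sum_add_distrib, sum_sub_distrib, ← sum_mul, ← mul_sum, sum_const,
    nsmul_eq_mul]
  field_simp
  ring

lemma rpow_three_halves_sq {x : ℝ} (hx : 0 ≤ x) : (x ^ ((3 : ℝ) / 2)) ^ 2 = x ^ 3 := by
  rw [← Real.rpow_natCast, ← Real.rpow_mul hx]
  norm_num

namespace FinitePlane

section CommRing

variable {R : Type*} [CommRing R]

def quadNorm (x : R × R) : R := x.1 ^ 2 + x.2 ^ 2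

lemma quadNorm_sub_comm (x y : R × R) : quadNorm (x - y) = quadNorm (y - x) := by
  simp only [quadNorm, Prod.fst_sub, Prod.snd_sub]; ring

lemma quadNorm_mul (x c : R × R) :
    quadNorm (x.1 * c.1 - x.2 * c.2, x.1 * c.2 + x.2 * c.1) = quadNorm x * quadNorm c := by
  simp only [quadNorm]; ring

lemma quadNorm_sub_eq_quadNorm_sub_iff (v w u : R × R) :
    quadNorm (v - u) = quadNorm (w - u) ↔
      2 * (w.1 - v.1) * u.1 + 2 * (w.2 - v.2) * u.2 = quadNorm w - quadNorm v := by
  simp only [quadNorm, Prod.fst_sub, Prod.snd_sub]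
  constructor <;> intro h <;> linear_combination h

end CommRing

variable {F : Type*} [Field F]

lemma two_ne_zero_of_odd_card [Fintype F] (hF : Odd (Fintype.card F)) : (2 : F) ≠ 0 :=
  Ring.two_ne_zero fun h => by
    simpa [Nat.odd_iff.mp hF] using FiniteField.even_card_iff_char_two.mp h

lemma exists_quadNorm_eq [Fintype F] (hF : Odd (Fintype.card F)) (t : F) :
    ∃ x : F × F, quadNorm x = t := by
  obtain ⟨a, b, hab⟩ := FiniteField.exists_root_sum_quadratic
    (Polynomial.degree_X_pow 2) (Polynomial.degree_X_pow_sub_C two_pos t) (Nat.odd_iff.mp hF)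
  refine ⟨(a, b), ?_⟩
  simp only [Polynomial.eval_pow, Polynomial.eval_X, Polynomial.eval_sub,
    Polynomial.eval_C] at hab
  unfold quadNorm
  linear_combination hab

variable [DecidableEq F]

def pinCount (E : Finset (F × F)) (u : F × F) (t : F) : ℕ := #{v ∈ E | quadNorm (v - u) = t}

def distances (E : Finset (F × F)) (u : F × F) : Finset F := E.image fun v => quadNorm (v - u)

lemma pinCount_eq_zero_iff {E : Finset (F × F)} {u : F × F} {t : F} :
    pinCount E u t = 0 ↔ t ∉ distances E u := by
  simp [pinCount, distances, filter_eq_empty_iff]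

lemma zero_mem_distances {E : Finset (F × F)} {e : F × F} (he : e ∈ E) : 0 ∈ distances E e :=
  mem_image.mpr ⟨e, he, by simp [quadNorm]⟩

variable [Fintype F]

def sphere (c : F × F) (t : F) : Finset (F × F) := {x | quadNorm (x - c) = t}

lemma card_filter_linear_eq_of_snd_ne_zero (a : F) {b : F} (c : F) (hb : b ≠ 0) :
    #{x : F × F | a * x.1 + b * x.2 = c} = Fintype.card F := by
  rw [← card_univ]
  refine card_nbij' Prod.fst (fun y => (y, (c - a * y) / b)) (by simp) ?_ ?_
    (fun _ _ => rfl)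
  · intro y _
    simp only [coe_filter, mem_univ, true_and, Set.mem_ofPred_eq]
    field_simp
    ring
  · intro x hx
    simp only [coe_filter, mem_univ, true_and, Set.mem_ofPred_eq] at hx
    ext
    · rfl
    · field_simp
      linear_combination -hx

lemma card_filter_linear_eq {a b : F} (c : F) (hab : (a, b) ≠ 0) :
    #{x : F × F | a * x.1 + b * x.2 = c} = Fintype.card F := by
  rcases ne_or_eq b 0 with hb | rfl
  · exact card_filter_linear_eq_of_snd_ne_zero a c hb
  · have ha : a ≠ 0 := by simpa using hab
    rw [← card_filter_linear_eq_of_snd_ne_zero 0 c ha]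
    refine card_nbij' Prod.swap Prod.swap ?_ ?_ (fun _ _ => rfl) (fun _ _ => rfl) <;>
      · intro x hx
        simp only [coe_filter, mem_univ, true_and, Set.mem_ofPred_eq] at hx ⊢
        simp only [Prod.fst_swap, Prod.snd_swap]
        linear_combination hx

-- the perpendicular bisector of `v` and `w`
lemma card_equidistant (h2 : (2 : F) ≠ 0) {v w : F × F} (hvw : v ≠ w) :
    #{u : F × F | quadNorm (v - u) = quadNorm (w - u)} = Fintype.card F := by
  simp_rw [quadNorm_sub_eq_quadNorm_sub_iff]
  refine card_filter_linear_eq _ fun h => hvw ?_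
  simp only [Prod.mk_eq_zero, mul_eq_zero, h2, false_or, sub_eq_zero] at h
  exact Prod.ext h.1.symm h.2.symm

lemma sum_card_sphere (c : F × F) : ∑ t, #(sphere c t) = Fintype.card F ^ 2 := by
  rw [sq, ← Fintype.card_prod, ← card_univ,
    card_eq_sum_card_fiberwise fun x _ => mem_univ (quadNorm (x - c))]
  rfl

lemma card_sphere (c : F × F) (t : F) : #(sphere c t) = #(sphere 0 t) := by
  refine card_nbij' (· - c) (· + c) ?_ ?_ (fun _ _ => sub_add_cancel _ _)
    (fun _ _ => add_sub_cancel_right _ _) <;>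
    · intro x hx
      simpa [sphere] using hx

lemma card_filter_sq_eq_le_two (a : F) : #{x : F | x ^ 2 = a} ≤ 2 := by
  rcases eq_empty_or_nonempty {x : F | x ^ 2 = a} with h | ⟨x₀, hx₀⟩
  · simp [h]
  · refine (card_le_card fun x hx => ?_).trans (card_le_two (a := x₀) (b := -x₀))
    simp only [mem_filter, mem_univ, true_and] at hx hx₀
    simpa using sq_eq_sq_iff_eq_or_eq_neg.mp (hx.trans hx₀.symm)

lemma card_sphere_zero_zero_le : #(sphere (0 : F × F) 0) ≤ 2 * Fintype.card F - 1 := by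
  set R : Finset F := {r | r ^ 2 = -1}
  -- a nonzero isotropic vector is a multiple of `(r, 1)` with `r ^ 2 = -1`
  have hsub :
      sphere (0 : F × F) 0 ⊆ {0} ∪ ((univ.erase 0 ×ˢ R).image fun p => (p.2 * p.1, p.1)) := by
    intro x hx
    simp only [sphere, quadNorm, sub_zero, mem_filter, mem_univ, true_and] at hx
    rcases eq_or_ne x.2 0 with h0 | h0
    · refine mem_union_left _ (mem_singleton.mpr (Prod.ext ?_ h0))
      simpa [h0] using hx
    · refine mem_union_right _ (mem_image.mpr ⟨(x.2, x.1 / x.2), ?_, ?_⟩)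
      · simp only [R, mem_product, mem_erase, mem_univ, mem_filter, true_and]
        refine ⟨⟨h0, trivial⟩, ?_⟩
        field_simp
        linear_combination hx
      · ext <;> field_simp
  have hR : #R ≤ 2 := by simpa using card_filter_sq_eq_le_two (-1 : F)
  have hq : 1 ≤ Fintype.card F := Fintype.card_pos
  calc #(sphere (0 : F × F) 0)
      ≤ 1 + (Fintype.card F - 1) * #R := by
        refine (card_le_card hsub).trans ((card_union_le _ _).trans (add_le_add (by simp) ?_))
        refine card_image_le.trans ?_
        rw [card_product, card_erase_of_mem (mem_univ _), card_univ]
    _ ≤ 2 * Fintype.card F - 1 := by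
        have := Nat.mul_le_mul_left (Fintype.card F - 1) hR
        omega

lemma card_sphere_le_card_sphere (hF : Odd (Fintype.card F)) {t t' : F} (ht : t ≠ 0)
    (ht' : t' ≠ 0) : #(sphere (0 : F × F) t') ≤ #(sphere (0 : F × F) t) := by
  obtain ⟨c, hc⟩ := exists_quadNorm_eq hF (t / t')
  have hc0 : quadNorm c ≠ 0 := hc ▸ div_ne_zero ht ht'
  refine card_le_card_of_injOn (fun x => (x.1 * c.1 - x.2 * c.2, x.1 * c.2 + x.2 * c.1))
    (fun x hx => ?_) (fun x _ y _ hxy => ?_)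
  · simp only [sphere, sub_zero, coe_filter, mem_univ, true_and, Set.mem_ofPred_eq] at hx ⊢
    rw [quadNorm_mul, hx, hc]
    field_simp
  · simp only [Prod.mk.injEq] at hxy
    simp only [quadNorm] at hc0
    ext
    · exact mul_right_cancel₀ hc0 (by linear_combination c.1 * hxy.1 + c.2 * hxy.2)
    · exact mul_right_cancel₀ hc0 (by linear_combination c.1 * hxy.2 - c.2 * hxy.1)

lemma card_le_card_sphere_add_one (hF : Odd (Fintype.card F)) (c : F × F) {t : F}
    (ht : t ≠ 0) : Fintype.card F ≤ #(sphere c t) + 1 := by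
  set q := Fintype.card F
  set s := #(sphere (0 : F × F) t)
  have hsum : q ^ 2 ≤ 2 * q - 1 + (q - 1) * s := by
    calc q ^ 2 = #(sphere (0 : F × F) 0) + ∑ t' ∈ univ.erase 0, #(sphere (0 : F × F) t') := by
          rw [add_sum_erase _ (fun t' => #(sphere (0 : F × F) t')) (mem_univ _), sum_card_sphere]
      _ ≤ 2 * q - 1 + ∑ _t' ∈ univ.erase (0 : F), s :=
          add_le_add card_sphere_zero_zero_le
            (sum_le_sum fun t' ht' => card_sphere_le_card_sphere hF ht (ne_of_mem_erase ht'))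
      _ = 2 * q - 1 + (q - 1) * s := by
          rw [sum_const, card_erase_of_mem (mem_univ _), card_univ, smul_eq_mul]
  rw [card_sphere]
  obtain ⟨k, hk⟩ : ∃ k, q = k + 1 := ⟨q - 1, (Nat.succ_pred_eq_of_pos Fintype.card_pos).symm⟩
  rw [hk] at hsum ⊢
  rcases Nat.eq_zero_or_pos k with rfl | hk0
  · omega
  · rw [show 2 * (k + 1) - 1 = 2 * k + 1 by omega, Nat.add_sub_cancel] at hsum
    have : k * k ≤ k * s := by nlinarith
    have := Nat.le_of_mul_le_mul_left this hk0
    omega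

lemma card_sub_one_le_card_sphere (hF : Odd (Fintype.card F)) (c : F × F) {t : F}
    (ht : t ≠ 0) : (Fintype.card F : ℝ) - 1 ≤ #(sphere c t) := by
  rw [sub_le_iff_le_add]
  exact_mod_cast card_le_card_sphere_add_one hF c ht

lemma sum_pinCount (E : Finset (F × F)) (t : F) :
    ∑ u, pinCount E u t = #E * #(sphere (0 : F × F) t) := by
  simp only [pinCount, card_filter]
  rw [sum_comm, ← smul_eq_mul, ← sum_const]
  refine sum_congr rfl fun v _ => ?_
  rw [← card_filter, ← card_sphere v]
  simp only [sphere, quadNorm_sub_comm v]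

lemma sum_pinCount_sq (E : Finset (F × F)) (u : F × F) :
    ∑ t, pinCount E u t ^ 2 = #{p ∈ E ×ˢ E | quadNorm (p.1 - u) = quadNorm (p.2 - u)} := by
  rw [card_eq_sum_card_fiberwise fun p _ => mem_univ (quadNorm (p.1 - u))]
  refine sum_congr rfl fun t _ => ?_
  rw [pinCount, sq, ← card_product, filter_filter]
  congr 1
  ext p
  simp only [mem_product, mem_filter]
  grind

-- diagonal pairs `(v, v)` contribute `q ^ 2` each, the others `q` each
lemma sum_sum_pinCount_sq (h2 : (2 : F) ≠ 0) (E : Finset (F × F)) :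
    ∑ u, ∑ t, pinCount E u t ^ 2 =
      #E * Fintype.card F ^ 2 + #E * (#E - 1) * Fintype.card F := by
  simp only [sum_pinCount_sq, card_filter]
  rw [sum_comm, sum_product]
  have hrow : ∀ v ∈ E, ∑ w ∈ E, #{u : F × F | quadNorm (v - u) = quadNorm (w - u)} =
      Fintype.card F ^ 2 + (#E - 1) * Fintype.card F := by
    intro v hv
    rw [← add_sum_erase _ _ hv, filter_true_of_mem (fun _ _ => rfl), card_univ,
      Fintype.card_prod, ← sq, ← card_erase_of_mem hv, ← smul_eq_mul, ← sum_const]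
    exact congrArg _ (sum_congr rfl fun w hw => card_equidistant h2 (ne_of_mem_erase hw).symm)
  simp only [← card_filter]
  rw [sum_congr rfl hrow, sum_const, smul_eq_mul]
  ring

-- `E` and the spheres about `e` of the radii missed by `e` are disjoint
lemma card_add_card_compl_distances_mul_le (hF : Odd (Fintype.card F)) {E : Finset (F × F)}
    {e : F × F} (he : e ∈ E) :
    #E + #(univ \ distances E e) * (Fintype.card F - 1) ≤ Fintype.card F ^ 2 := by
  have hE : #E ≤ ∑ t ∈ distances E e, #(sphere e t) := by
    refine (card_le_card fun v hv => ?_).trans card_biUnion_le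
    exact mem_biUnion.mpr ⟨_, mem_image_of_mem _ hv, by simp [sphere]⟩
  have hmissed : #(univ \ distances E e) * (Fintype.card F - 1) ≤
      ∑ t ∈ univ \ distances E e, #(sphere e t) := by
    rw [← smul_eq_mul]
    refine card_nsmul_le_sum _ _ _ fun t ht => ?_
    have ht0 : t ≠ 0 := by
      rintro rfl
      exact (mem_sdiff.mp ht).2 (zero_mem_distances he)
    have := card_le_card_sphere_add_one hF e ht0
    omega
  rw [← sum_card_sphere e, ← sum_sdiff (subset_univ (distances E e))]
  omega

-- `q ^ 2` times the variance of `pinCount E · t` over the centres, summed over `t ≠ 0`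
noncomputable def pinDeviation (E : Finset (F × F)) : ℝ :=
  ∑ t ∈ univ.erase 0, ∑ u,
    ((pinCount E u t : ℝ) - #E * #(sphere (0 : F × F) t) / Fintype.card F ^ 2) ^ 2

lemma pinDeviation_le (hF : Odd (Fintype.card F)) {E : Finset (F × F)} (hE : E.Nonempty) :
    pinDeviation E ≤ #E * Fintype.card F ^ 2 + #E * (#E - 1) * Fintype.card F -
      #E ^ 2 * (Fintype.card F - 1) ^ 3 / Fintype.card F ^ 2 := by
  have hsum (t : F) : ∑ u, (pinCount E u t : ℝ) = #E * #(sphere (0 : F × F) t) := by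
    exact_mod_cast sum_pinCount E t
  have hcard : (#(univ : Finset (F × F)) : ℝ) = Fintype.card F ^ 2 := by
    simp [Fintype.card_prod, sq]
  have henergy : ∑ t, ∑ u, (pinCount E u t : ℝ) ^ 2 =
      #E * Fintype.card F ^ 2 + #E * (#E - 1) * Fintype.card F := by
    rw [sum_comm, ← Nat.cast_one, ← Nat.cast_sub hE.card_pos]
    exact_mod_cast sum_sum_pinCount_sq (two_ne_zero_of_odd_card hF) E
  set q : ℝ := (Fintype.card F : ℝ)
  set N : ℝ := (#E : ℝ)
  have hvariance (t : F) :
      ∑ u, ((pinCount E u t : ℝ) - N * #(sphere (0 : F × F) t) / q ^ 2) ^ 2 =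
        ∑ u, (pinCount E u t : ℝ) ^ 2 - N ^ 2 * #(sphere (0 : F × F) t) ^ 2 / q ^ 2 := by
    rw [← hsum, ← hcard, sum_sub_sum_div_card_sq, hsum]
    ring
  have hspheres : (q - 1) * (q - 1) ^ 2 ≤
      ∑ t ∈ univ.erase 0, (#(sphere (0 : F × F) t) : ℝ) ^ 2 := by
    have hq : (1 : ℝ) ≤ q := Nat.one_le_cast.mpr Fintype.card_pos
    calc (q - 1) * (q - 1) ^ 2 = ∑ _t ∈ univ.erase (0 : F), (q - 1) ^ 2 := by
          rw [sum_const, card_erase_of_mem (mem_univ _), card_univ, nsmul_eq_mul,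
            Nat.cast_sub Fintype.card_pos, Nat.cast_one]
      _ ≤ _ := sum_le_sum fun t ht => pow_le_pow_left₀ (by linarith)
          (card_sub_one_le_card_sphere hF 0 (ne_of_mem_erase ht)) 2
  calc pinDeviation E
      = ∑ t ∈ univ.erase 0, ∑ u, (pinCount E u t : ℝ) ^ 2 -
          N ^ 2 / q ^ 2 * ∑ t ∈ univ.erase 0, (#(sphere (0 : F × F) t) : ℝ) ^ 2 := by
        rw [pinDeviation, sum_congr rfl fun t _ => hvariance t, sum_sub_distrib, mul_sum]
        congr 1
        exact sum_congr rfl fun t _ => by ring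
    _ ≤ N * q ^ 2 + N * (N - 1) * q - N ^ 2 / q ^ 2 * ((q - 1) * (q - 1) ^ 2) := by
        refine sub_le_sub (henergy ▸ sum_le_sum_of_subset_of_nonneg (subset_univ _)
          fun _ _ _ => by positivity) (mul_le_mul_of_nonneg_left hspheres (by positivity))
    _ = _ := by ring

lemma le_pinDeviation (hF : Odd (Fintype.card F)) {E : Finset (F × F)}
    (hmissed : ∀ e ∈ E, (Fintype.card F : ℝ) / 2 ≤ #(univ \ distances E e)) :
    #E * (Fintype.card F / 2) * (#E * (Fintype.card F - 1) / Fintype.card F ^ 2) ^ 2 ≤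
      pinDeviation E := by
  set q : ℝ := (Fintype.card F : ℝ)
  set c : ℝ := #E * (q - 1) / q ^ 2
  have hc : 0 ≤ c := by
    have : (1 : ℝ) ≤ q := Nat.one_le_cast.mpr Fintype.card_pos
    exact div_nonneg (mul_nonneg (Nat.cast_nonneg _) (by linarith)) (by positivity)
  -- every radius `t` missed by `e ∈ E` contributes the square of its mean, at least `c ^ 2`
  have hpoint (e : F × F) (he : e ∈ E) : q / 2 * c ^ 2 ≤
      ∑ t ∈ univ.erase 0, ((pinCount E e t : ℝ) - #E * #(sphere (0 : F × F) t) / q ^ 2) ^ 2 := by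
    have hsub : univ \ distances E e ⊆ univ.erase 0 := fun t ht =>
      mem_erase.mpr ⟨fun h => (mem_sdiff.mp ht).2 (h ▸ zero_mem_distances he), mem_univ t⟩
    have hterm (t : F) (ht : t ∈ univ \ distances E e) :
        c ^ 2 ≤ ((pinCount E e t : ℝ) - #E * #(sphere (0 : F × F) t) / q ^ 2) ^ 2 := by
      rw [pinCount_eq_zero_iff.mpr (mem_sdiff.mp ht).2, Nat.cast_zero, zero_sub, neg_sq]
      refine pow_le_pow_left₀ hc (div_le_div_of_nonneg_right ?_ (by positivity)) 2
      refine mul_le_mul_of_nonneg_left ?_ (Nat.cast_nonneg _)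
      exact card_sub_one_le_card_sphere hF 0 (ne_of_mem_erase (hsub ht))
    calc q / 2 * c ^ 2 ≤ #(univ \ distances E e) * c ^ 2 :=
          mul_le_mul_of_nonneg_right (hmissed e he) (sq_nonneg c)
      _ ≤ _ := by simpa only [nsmul_eq_mul] using card_nsmul_le_sum _ _ _ hterm
      _ ≤ _ := sum_le_sum_of_subset_of_nonneg hsub fun _ _ _ => by positivity
  calc #E * (q / 2) * c ^ 2 = ∑ _e ∈ E, q / 2 * c ^ 2 := by rw [sum_const, nsmul_eq_mul]; ring
    _ ≤ ∑ e ∈ E, ∑ t ∈ univ.erase 0,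
          ((pinCount E e t : ℝ) - #E * #(sphere (0 : F × F) t) / q ^ 2) ^ 2 := sum_le_sum hpoint
    _ ≤ ∑ u, ∑ t ∈ univ.erase 0,
          ((pinCount E u t : ℝ) - #E * #(sphere (0 : F × F) t) / q ^ 2) ^ 2 :=
        sum_le_sum_of_subset_of_nonneg (subset_univ E) fun _ _ _ => by positivity
    _ = pinDeviation E := sum_comm

lemma sq_card_mul_sq_le (hF : Odd (Fintype.card F)) {E : Finset (F × F)} (hE : E.Nonempty)
    (hmissed : ∀ e ∈ E, (Fintype.card F : ℝ) / 2 ≤ #(univ \ distances E e)) :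
    (#E : ℝ) ^ 2 * (Fintype.card F - 1) ^ 2 ≤
      2 * Fintype.card F ^ 5 + 6 * #E * Fintype.card F ^ 3 := by
  have h := (le_pinDeviation hF hmissed).trans (pinDeviation_le hF hE)
  have hq : (1 : ℝ) ≤ Fintype.card F := Nat.one_le_cast.mpr Fintype.card_pos
  have hN : (0 : ℝ) < #E := Nat.cast_pos.mpr hE.card_pos
  generalize (Fintype.card F : ℝ) = q at *
  generalize (#E : ℝ) = N at *
  have hq0 : q ≠ 0 := by positivity
  have h' : N * q * (N ^ 2 * (q - 1) ^ 2) ≤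
      N * q * (2 * q ^ 5 + 2 * (N - 1) * q ^ 4 - 2 * N * q * (q - 1) ^ 3) := calc
    _ = 2 * q ^ 4 * (N * (q / 2) * (N * (q - 1) / q ^ 2) ^ 2) := by field_simp
    _ ≤ 2 * q ^ 4 * (N * q ^ 2 + N * (N - 1) * q - N ^ 2 * (q - 1) ^ 3 / q ^ 2) :=
        mul_le_mul_of_nonneg_left h (by positivity)
    _ = _ := by field_simp
  nlinarith [le_of_mul_le_mul_left h' (by positivity)]

lemma sq_card_le_of_card_le_sixteen (hF : Odd (Fintype.card F)) (hq : Fintype.card F ≤ 16)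
    {E : Finset (F × F)} {e : F × F} (he : e ∈ E)
    (hmissed : (Fintype.card F : ℝ) / 2 ≤ #(univ \ distances E e)) :
    (#E : ℝ) ^ 2 ≤ 8 * Fintype.card F ^ 3 := by
  have h : (#E : ℝ) + #(univ \ distances E e) * (Fintype.card F - 1) ≤ Fintype.card F ^ 2 := by
    rw [← Nat.cast_one, ← Nat.cast_sub Fintype.card_pos]
    exact_mod_cast card_add_card_compl_distances_mul_le hF he
  have hq1 : (1 : ℝ) ≤ Fintype.card F := Nat.one_le_cast.mpr Fintype.card_pos
  have hq16 : (Fintype.card F : ℝ) ≤ 16 := by exact_mod_cast hq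
  generalize (Fintype.card F : ℝ) = q at *
  have hN : 2 * #E ≤ q ^ 2 + q := by nlinarith
  nlinarith [mul_nonneg (mul_nonneg (sub_nonneg.2 hq1) (sub_nonneg.2 hq16)) (sq_nonneg q)]

lemma sq_card_le_of_seventeen_le_card (hF : Odd (Fintype.card F)) (hq : 17 ≤ Fintype.card F)
    {E : Finset (F × F)} (hE : E.Nonempty)
    (hmissed : ∀ e ∈ E, (Fintype.card F : ℝ) / 2 ≤ #(univ \ distances E e)) :
    (#E : ℝ) ^ 2 ≤ 8 * Fintype.card F ^ 3 := by
  have h := sq_card_mul_sq_le hF hE hmissed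
  have hq17 : (17 : ℝ) ≤ Fintype.card F := by exact_mod_cast hq
  have hN : (0 : ℝ) < #E := Nat.cast_pos.mpr hE.card_pos
  generalize (Fintype.card F : ℝ) = q at *
  generalize (#E : ℝ) = N at *
  have hq0 : 0 < q := by linarith
  by_contra! hN3
  have h1 : 256 * N ^ 2 ≤ 289 * (2 * q ^ 3 + 6 * N * q) := by
    have : 256 * q ^ 2 ≤ 289 * (q - 1) ^ 2 := by nlinarith
    nlinarith [mul_le_mul_of_nonneg_left this (sq_nonneg N), pow_pos hq0 2]
  have h2 : N < 10 * q := by nlinarith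
  nlinarith [mul_lt_mul_of_pos_left h2 hN, pow_pos hq0 2]

end FinitePlane

open FinitePlane in
theorem pinned_distances
    {F : Type*} [Field F] [Fintype F] [DecidableEq F] (q : ℕ) (hq : Fintype.card F = q)
    (hodd : Odd q) (E : Finset (F × F))
    (h : (E.card : ℝ) > (2 * (q : ℝ)) ^ ((3 : ℝ) / 2)) :
    ∃ e ∈ E,
      ((E.image (fun v : F × F => (v.1 - e.1) ^ 2 + (v.2 - e.2) ^ 2)).card : ℝ)
        > (q : ℝ) / 2 := by
  subst hq
  have hE : 8 * (Fintype.card F : ℝ) ^ 3 < #E ^ 2 := by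
    have h2 := pow_lt_pow_left₀ h (by positivity) two_ne_zero
    rwa [rpow_three_halves_sq (by positivity), mul_pow, show (2 : ℝ) ^ 3 = 8 by norm_num] at h2
  by_contra! hsmall
  have hmissed (e : F × F) (he : e ∈ E) :
      (Fintype.card F : ℝ) / 2 ≤ #(univ \ distances E e) := by
    have h := hsmall e he
    change (#(distances E e) : ℝ) ≤ _ at h
    rw [card_univ_sdiff, Nat.cast_sub (card_le_univ _)]
    linarith
  obtain ⟨e, he⟩ : E.Nonempty := by
    rw [nonempty_iff_ne_empty]
    rintro rfl
    simp only [card_empty, CharP.cast_eq_zero] at hE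
    linarith [pow_pos (Nat.cast_pos.mpr (Fintype.card_pos (α := F)) : (0 : ℝ) < _) 3]
  rcases le_or_gt (Fintype.card F) 16 with hq | hq
  · exact (sq_card_le_of_card_le_sixteen hodd hq he (hmissed e he)).not_gt hE
  · exact (sq_card_le_of_seventeen_le_card hodd hq ⟨e, he⟩ hmissed).not_gt hE
end
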